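/- arXiv:1406.0644 — 3 statements merged into one kernel-verified Lean document; each statement's English description precedes it below -/
import Mathlib

section
/- There exists a positive constant C such that for every C² solution q of D/dt q̇ + ∇V(q) = 0 on an interval [0,t₀] with q(0) ∈ V⁻¹(E), q̇(0) = 0, and q(t) ∈ V⁻¹((−∞,E)) for all t ∈ (0,t₀], one has ‖ ∇V(q(t))/‖∇V(q(t))‖ + q̇(t)/‖q̇(t)‖ ‖ ≤ C t for all t ∈ (0,t₀]. -/
open MeasureTheory Set Matrix Filter Topology

namespace JacobiPaper

noncomputable section

/-- Points/vectors of the ambient space `ℝ^N` in which the manifold `M` is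
topologically embedded as an open subset. -/
abbrev Vec (N : ℕ) := Fin N → ℝ

variable {N : ℕ}

/-- The inner product determined by a field of matrices `g` at the point `x`. -/
def gP (g : Vec N → Matrix (Fin N) (Fin N) ℝ) (x v w : Vec N) : ℝ :=
  ∑ i, ∑ j, g x i j * v i * w j

/-- The Euclidean gradient (the differential, as a vector). -/
def euclGrad (V : Vec N → ℝ) (x : Vec N) : Vec N :=
  fun i => fderiv ℝ V x (Pi.single i 1)

/-- The setting of the paper: a `C³` Riemannian metric `g` on a neighborhood `U` of
the compact sublevel `V⁻¹((-∞,E])`, with `V` of class `C²` there and `E` a regular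
value of `V`. -/
structure Setting (N : ℕ) where
  g : Vec N → Matrix (Fin N) (Fin N) ℝ
  V : Vec N → ℝ
  E : ℝ
  U : Set (Vec N)
  hdim : 1 ≤ N
  hU : IsOpen U
  hsub : {x | V x ≤ E} ⊆ U
  hgC : ∀ i j, ContDiffOn ℝ 3 (fun x => g x i j) U
  hgsymm : ∀ x ∈ U, ∀ i j, g x i j = g x j i
  hgpos : ∀ x ∈ U, ∀ v : Vec N, v ≠ 0 → 0 < gP g x v v
  hVC : ContDiffOn ℝ 2 V U
  hreg : ∀ x, V x = E → euclGrad V x ≠ 0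
  hcomp : IsCompact {x : Vec N | V x ≤ E}

namespace Setting

variable (S : Setting N)

/-- The Riemannian inner product `g_x(v,w)`. -/
def prod (x v w : Vec N) : ℝ := gP S.g x v w

/-- The Riemannian norm `‖v‖_x`. -/
def gnorm (x v : Vec N) : ℝ := Real.sqrt (S.prod x v v)

/-- The gradient of `V` with respect to `g`. -/
def grad (x : Vec N) : Vec N := (S.g x)⁻¹ *ᵥ euclGrad S.V x

/-- Christoffel symbols `Γ^k_{ij}` of the Levi-Civita connection of `g`. -/
def christoffel (x : Vec N) (k i j : Fin N) : ℝ :=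
  (1/2) * ∑ l, (S.g x)⁻¹ k l *
    (fderiv ℝ (fun y => S.g y l j) x (Pi.single i 1)
     + fderiv ℝ (fun y => S.g y l i) x (Pi.single j 1)
     - fderiv ℝ (fun y => S.g y i j) x (Pi.single l 1))

/-- Covariant derivative, along the curve `q` with velocity `q'`, of the vector field
`ξ` whose (pointwise) derivative is `ξ'`. -/
def covD (q q' ξ ξ' : ℝ → Vec N) (s : ℝ) : Vec N :=
  fun k => ξ' s k + ∑ i, ∑ j, S.christoffel (q s) k i j * q' s i * ξ s j

/-- The Riemann curvature tensor `R(u,v)w` of `g` at `x`. -/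
def curv (x u v w : Vec N) : Vec N :=
  fun l => ∑ i, ∑ j, ∑ k, u i * v j * w k *
    (fderiv ℝ (fun y => S.christoffel y l j k) x (Pi.single i 1)
     - fderiv ℝ (fun y => S.christoffel y l i k) x (Pi.single j 1)
     + ∑ m, (S.christoffel x l i m * S.christoffel x m j k
             - S.christoffel x l j m * S.christoffel x m i k))

/-- The Hessian operator of `V` with respect to `g`: `ξ ↦ ∇_ξ ∇V`. -/
def hessV (x ξ : Vec N) : Vec N :=
  fun k => ∑ i, ξ i * (fderiv ℝ (fun y => S.grad y k) x (Pi.single i 1)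
    + ∑ j, S.christoffel x k i j * S.grad x j)

/-- The Jacobi-metric geodesic equation (eq. (2.5) of the paper) at the instant `s`,
for a curve `x` with derivative `x'` and second derivative `x''`. -/
def GeoEqAt (x x' x'' : ℝ → Vec N) (s : ℝ) : Prop :=
  ∀ k, (S.E - S.V (x s)) * S.covD x x' x' x'' s k
    - S.prod (x s) (S.grad (x s)) (x' s) * x' s k
    + (1/2) * S.prod (x s) (x' s) (x' s) * S.grad (x s) k = 0

end Setting

/-- `q` is of class `C²` on `I` with first derivative `q'` and second derivative `q''`. -/
def C2OnWith (q q' q'' : ℝ → Vec N) (I : Set ℝ) : Prop :=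
  (∀ t ∈ I, HasDerivWithinAt q (q' t) I t) ∧
  (∀ t ∈ I, HasDerivWithinAt q' (q'' t) I t) ∧
  ContinuousOn q'' I

/-- `x` belongs to the Sobolev space `H¹([a,b],ℝ^N)`: it is absolutely continuous
(primitive of its a.e. derivative) with square-integrable derivative. -/
def H1On (x : ℝ → Vec N) (a b : ℝ) : Prop :=
  ContinuousOn x (Icc a b) ∧
  IntegrableOn (deriv x) (Icc a b) ∧
  IntegrableOn (fun s => ‖deriv x s‖ ^ 2) (Icc a b) ∧
  ∀ t ∈ Icc a b, x t = x a + ∫ s in a..t, deriv x s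

/-- `x` is absolutely continuous on `[a,b]`. -/
def ACOn (x : ℝ → Vec N) (a b : ℝ) : Prop :=
  ContinuousOn x (Icc a b) ∧
  IntegrableOn (deriv x) (Icc a b) ∧
  ∀ t ∈ Icc a b, x t = x a + ∫ s in a..t, deriv x s

namespace Setting

variable (S : Setting N)

/-- The weak (distributional) form (eq. (2.7)) of the Jacobi geodesic equation on `(a,b)`,
tested against all `ξ ∈ C^∞_0((a,b),ℝ^N)`. -/
def WeakGeo (x : ℝ → Vec N) (a b : ℝ) : Prop :=
  ∀ ξ : ℝ → Vec N, ContDiff ℝ (⊤ : ℕ∞) ξ → tsupport ξ ⊆ Ioo a b →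
    (∫ s in a..b,
      ((S.E - S.V (x s)) * S.prod (x s) (deriv x s) (S.covD x (deriv x) ξ (deriv ξ) s)
        - (1/2) * S.prod (x s) (deriv x s) (deriv x s)
            * S.prod (x s) (S.grad (x s)) (ξ s))) = 0

/-- The space `X_Q`. -/
def InXQ (Q : Vec N) (x : ℝ → Vec N) : Prop :=
  H1On x 0 1 ∧ S.V (x 0) = S.E ∧ (∀ s ∈ Ioc (0:ℝ) 1, S.V (x s) < S.E) ∧ x 1 = Q

/-- The Jacobi length functional `L_V`. -/
def LV (x : ℝ → Vec N) : ℝ :=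
  ∫ s in (0:ℝ)..1,
    Real.sqrt ((1/2) * (S.E - S.V (x s)) * S.prod (x s) (deriv x s) (deriv x s))

/-- The distance `d_V(Q)` from `Q` to the boundary of the potential well. -/
def dV (Q : Vec N) : ℝ := sInf {r | ∃ x, S.InXQ Q x ∧ r = S.LV x}

/-- `γ : [0,a] → M` is a `g_*`-geodesic starting at `V⁻¹(E)`, staying in the potential
well for `s > 0`, parameterized by arc length (`½ g(γ̇,γ̇)(E−V(γ)) ≡ 1`). -/
def IsBdryGeo (γ : ℝ → Vec N) (a : ℝ) : Prop :=
  0 < a ∧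
  ContinuousOn γ (Icc 0 a) ∧
  (∀ s ∈ Ioc (0:ℝ) a, ContDiffAt ℝ 2 γ s) ∧
  S.V (γ 0) = S.E ∧
  (∀ s ∈ Ioc (0:ℝ) a, S.V (γ s) < S.E) ∧
  (∀ s ∈ Ioc (0:ℝ) a, S.GeoEqAt γ (deriv γ) (deriv (deriv γ)) s) ∧
  (∀ s ∈ Ioc (0:ℝ) a, (1/2) * S.prod (γ s) (deriv γ s) (deriv γ s) * (S.E - S.V (γ s)) = 1)

/-- The index form `I_{s₁,s₂}(ξ,η)` along `γ`. -/
def idxForm (γ : ℝ → Vec N) (s₁ s₂ : ℝ) (ξ η : ℝ → Vec N) : ℝ :=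
  ∫ u in s₁..s₂,
    ((S.E - S.V (γ u)) *
        (S.prod (γ u) (S.covD γ (deriv γ) ξ (deriv ξ) u) (S.covD γ (deriv γ) η (deriv η) u)
          + S.prod (γ u) (S.curv (γ u) (deriv γ u) (ξ u) (deriv γ u)) (η u))
      - (S.prod (γ u) (S.grad (γ u)) (ξ u)
            * S.prod (γ u) (deriv γ u) (S.covD γ (deriv γ) η (deriv η) u)
          + S.prod (γ u) (deriv γ u) (S.covD γ (deriv γ) ξ (deriv ξ) u)
            * S.prod (γ u) (S.grad (γ u)) (η u)
          + (1/2) * S.prod (γ u) (S.hessV (γ u) (ξ u)) (η u)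
            * S.prod (γ u) (deriv γ u) (deriv γ u)))

/-- Membership in the space `Y_s^W`: absolutely continuous vector fields along `γ|[0,s]`
with finite weighted norm, with `ξ(0) ∈ T_{γ(0)}V⁻¹(E)` and `ξ(s) = W`. -/
def InY (γ : ℝ → Vec N) (s : ℝ) (W : Vec N) (ξ : ℝ → Vec N) : Prop :=
  ACOn ξ 0 s ∧
  IntegrableOn (fun u => (S.E - S.V (γ u)) *
      S.prod (γ u) (S.covD γ (deriv γ) ξ (deriv ξ) u)
        (S.covD γ (deriv γ) ξ (deriv ξ) u)) (Icc 0 s) ∧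
  S.prod (γ 0) (S.grad (γ 0)) (ξ 0) = 0 ∧
  ξ s = W

/-- The weighted squared norm `⟨ξ,ξ⟩_{0,s}`. -/
def wNormSq (γ : ℝ → Vec N) (s : ℝ) (ξ : ℝ → Vec N) : ℝ :=
  ∫ u in (0:ℝ)..s, (S.E - S.V (γ u)) *
    S.prod (γ u) (S.covD γ (deriv γ) ξ (deriv ξ) u) (S.covD γ (deriv γ) ξ (deriv ξ) u)

/-- The Jacobi field equation (eq. (4.9)) at the instant `u`. -/
def JacobiEqAt (γ ξ : ℝ → Vec N) (u : ℝ) : Prop :=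
  ∀ k, - deriv (fun t => (S.E - S.V (γ t)) * S.covD γ (deriv γ) ξ (deriv ξ) t k) u
      + (S.E - S.V (γ u)) * S.curv (γ u) (deriv γ u) (ξ u) (deriv γ u) k
      + deriv (fun t => S.prod (γ t) (S.grad (γ t)) (ξ t) * deriv γ t k) u
      - S.prod (γ u) (deriv γ u) (S.covD γ (deriv γ) ξ (deriv ξ) u) * S.grad (γ u) k
      - (1/2) * S.prod (γ u) (deriv γ u) (deriv γ u) * S.hessV (γ u) (ξ u) k = 0

/-- `ξ` is a Jacobi field along `γ|[0,s]`: of class `C⁰([0,s]) ∩ C²((0,s])` and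
solving the Jacobi equation on `(0,s]`. -/
def IsJacobi (γ ξ : ℝ → Vec N) (s : ℝ) : Prop :=
  ContinuousOn ξ (Icc 0 s) ∧ (∀ u ∈ Ioc (0:ℝ) s, ContDiffAt ℝ 2 ξ u) ∧
  ∀ u ∈ Ioc (0:ℝ) s, S.JacobiEqAt γ ξ u

/-- The boundary condition (eq. (4.10)): the continuous extension at `s = 0` of
`(E−V(γ))Dξ/ds − g(∇V(γ),ξ)γ̇` is parallel to `∇V(γ(0))`. -/
def BdryCond (γ ξ : ℝ → Vec N) : Prop :=
  ∃ c : ℝ, Tendsto (fun u => (fun k => (S.E - S.V (γ u)) * S.covD γ (deriv γ) ξ (deriv ξ) u k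
      - S.prod (γ u) (S.grad (γ u)) (ξ u) * deriv γ u k))
    (nhdsWithin 0 (Ioi 0)) (nhds (c • S.grad (γ 0)))

end Setting

/-- The family `ξ : Fin n → (ℝ → Vec N)` is linearly independent as fields on `I`. -/
def IndepOn {n : ℕ} (I : Set ℝ) (ξ : Fin n → ℝ → Vec N) : Prop :=
  ∀ c : Fin n → ℝ, (∀ u ∈ I, (∑ i, c i • ξ i) u = 0) → c = 0

/-- The index of the quadratic form `B` on the class `C` of vector fields (regarded as
fields on `I`) is at least `n`. -/
def IndexGe {N : ℕ} (B : (ℝ → Vec N) → ℝ) (C : (ℝ → Vec N) → Prop) (I : Set ℝ) (n : ℕ) : Prop :=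
  ∃ ξ : Fin n → ℝ → Vec N, (∀ i, C (ξ i)) ∧ IndepOn I ξ ∧
    ∀ c : Fin n → ℝ, c ≠ 0 → B (∑ i, c i • ξ i) < 0

/-- The index of the quadratic form `B` on the class `C` equals `n`. -/
def IndexEq {N : ℕ} (B : (ℝ → Vec N) → ℝ) (C : (ℝ → Vec N) → Prop) (I : Set ℝ) (n : ℕ) : Prop :=
  IndexGe B C I n ∧ ¬ IndexGe B C I (n+1)

/-- The nullity of a bilinear form `B` on the class `C` is at least `n`. -/
def NullGe {N : ℕ} (B : (ℝ → Vec N) → (ℝ → Vec N) → ℝ) (C : (ℝ → Vec N) → Prop)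
    (I : Set ℝ) (n : ℕ) : Prop :=
  ∃ ξ : Fin n → ℝ → Vec N, (∀ i, C (ξ i)) ∧ IndepOn I ξ ∧
    ∀ i, ∀ η, C η → B (ξ i) η = 0

/-- The nullity of a bilinear form `B` on the class `C` equals `n`. -/
def NullEq {N : ℕ} (B : (ℝ → Vec N) → (ℝ → Vec N) → ℝ) (C : (ℝ → Vec N) → Prop)
    (I : Set ℝ) (n : ℕ) : Prop :=
  NullGe B C I n ∧ ¬ NullGe B C I (n+1)

namespace Setting

variable (S : Setting N)

/-- `ξ` is a (nontrivial candidate) field realizing conjugacy at `γ(s)`: a Jacobi field in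
`Y_s` satisfying the boundary condition (4.10). -/
def ConjField (γ : ℝ → Vec N) (s : ℝ) (ξ : ℝ → Vec N) : Prop :=
  S.InY γ s 0 ξ ∧ S.IsJacobi γ ξ s ∧ S.BdryCond γ ξ

/-- `γ(s)` is conjugate to `V⁻¹(E)` with multiplicity at least `n`. -/
def MultGe (γ : ℝ → Vec N) (s : ℝ) (n : ℕ) : Prop :=
  ∃ ξ : Fin n → ℝ → Vec N, (∀ i, S.ConjField γ s (ξ i)) ∧ IndepOn (Icc 0 s) ξ

/-- `γ(s)` is conjugate to `V⁻¹(E)`. -/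
def IsConj (γ : ℝ → Vec N) (s : ℝ) : Prop := S.MultGe γ s 1

/-- `γ(s)` is conjugate to `V⁻¹(E)` with multiplicity exactly `n`. -/
def Mult (γ : ℝ → Vec N) (s : ℝ) (n : ℕ) : Prop :=
  S.MultGe γ s n ∧ ¬ S.MultGe γ s (n+1)

end Setting

namespace Aux

variable {g : Vec N → Matrix (Fin N) (Fin N) ℝ} {x : Vec N}

lemma gP_add_left (v w u : Vec N) : gP g x (v + w) u = gP g x v u + gP g x w u := by
  unfold gP
  rw [← Finset.sum_add_distrib]
  refine Finset.sum_congr rfl fun i _ => ?_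
  rw [← Finset.sum_add_distrib]
  refine Finset.sum_congr rfl fun j _ => ?_
  simp [Pi.add_apply]; ring

lemma gP_smul_left (c : ℝ) (v u : Vec N) : gP g x (c • v) u = c * gP g x v u := by
  unfold gP
  rw [Finset.mul_sum]
  refine Finset.sum_congr rfl fun i _ => ?_
  rw [Finset.mul_sum]
  refine Finset.sum_congr rfl fun j _ => ?_
  simp [Pi.smul_apply, smul_eq_mul]; ring

lemma gP_add_right (v w u : Vec N) : gP g x u (v + w) = gP g x u v + gP g x u w := by
  unfold gP
  rw [← Finset.sum_add_distrib]
  refine Finset.sum_congr rfl fun i _ => ?_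
  rw [← Finset.sum_add_distrib]
  refine Finset.sum_congr rfl fun j _ => ?_
  simp [Pi.add_apply]; ring

lemma gP_smul_right (c : ℝ) (v u : Vec N) : gP g x u (c • v) = c * gP g x u v := by
  unfold gP
  rw [Finset.mul_sum]
  refine Finset.sum_congr rfl fun i _ => ?_
  rw [Finset.mul_sum]
  refine Finset.sum_congr rfl fun j _ => ?_
  simp [Pi.smul_apply, smul_eq_mul]; ring

lemma gP_zero_left (u : Vec N) : gP g x 0 u = 0 := by
  unfold gP; simp

lemma gP_sym (hsym : ∀ i j, g x i j = g x j i) (v w : Vec N) :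
    gP g x v w = gP g x w v := by
  unfold gP
  rw [Finset.sum_comm]
  refine Finset.sum_congr rfl fun i _ => Finset.sum_congr rfl fun j _ => ?_
  rw [hsym]; ring

lemma gP_smul_self (c : ℝ) (v : Vec N) : gP g x (c • v) (c • v) = c ^ 2 * gP g x v v := by
  rw [gP_smul_left, gP_smul_right]; ring

lemma gP_cs (hpos : ∀ v : Vec N, 0 ≤ gP g x v v) (hsym : ∀ i j, g x i j = g x j i)
    (v w : Vec N) : (gP g x v w) ^ 2 ≤ gP g x v v * gP g x w w := by
  have key : ∀ t : ℝ, 0 ≤ gP g x w w * (t * t) + (2 * gP g x v w) * t + gP g x v v := by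
    intro t
    have h0 := hpos (v + t • w)
    rw [gP_add_left, gP_add_right, gP_add_right, gP_smul_left, gP_smul_right,
      gP_smul_right, gP_smul_left] at h0
    rw [gP_sym hsym w v] at h0
    nlinarith [h0]
  have hd := discrim_le_zero key
  rw [discrim] at hd
  nlinarith [hd]

end Aux

namespace Setting

variable (S : Setting N) {x : Vec N}

lemma prod_self_nonneg (hx : x ∈ S.U) (v : Vec N) : 0 ≤ S.prod x v v := by
  rcases eq_or_ne v 0 with rfl | hv
  · rw [prod, Aux.gP_zero_left]
  · exact (S.hgpos x hx v hv).le

lemma gnorm_nonneg (x v : Vec N) : 0 ≤ S.gnorm x v := Real.sqrt_nonneg _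

lemma gnorm_zero (x : Vec N) : S.gnorm x 0 = 0 := by
  rw [gnorm, prod, Aux.gP_zero_left, Real.sqrt_zero]

lemma gnorm_smul (c : ℝ) (x v : Vec N) : S.gnorm x (c • v) = |c| * S.gnorm x v := by
  rw [gnorm, gnorm, prod, prod, Aux.gP_smul_self, Real.sqrt_mul (sq_nonneg c),
    Real.sqrt_sq_eq_abs]

lemma gnorm_neg (x v : Vec N) : S.gnorm x (-v) = S.gnorm x v := by
  have : (-v) = (-1 : ℝ) • v := by ext i; simp
  rw [this, gnorm_smul]; simp

lemma gnorm_sq (hx : x ∈ S.U) (v : Vec N) : S.gnorm x v ^ 2 = S.prod x v v :=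
  Real.sq_sqrt (S.prod_self_nonneg hx v)

lemma gnorm_pos (hx : x ∈ S.U) {v : Vec N} (hv : v ≠ 0) : 0 < S.gnorm x v :=
  Real.sqrt_pos.2 (S.hgpos x hx v hv)

lemma abs_prod_le (hx : x ∈ S.U) (v w : Vec N) :
    |S.prod x v w| ≤ S.gnorm x v * S.gnorm x w := by
  have hcs := Aux.gP_cs (g := S.g) (x := x) (fun u => S.prod_self_nonneg hx u)
    (S.hgsymm x hx) v w
  have h1 : |S.prod x v w| = Real.sqrt ((gP S.g x v w) ^ 2) := by
    rw [Real.sqrt_sq_eq_abs]; rfl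
  rw [h1]
  calc Real.sqrt ((gP S.g x v w) ^ 2) ≤ Real.sqrt (gP S.g x v v * gP S.g x w w) :=
        Real.sqrt_le_sqrt hcs
    _ = S.gnorm x v * S.gnorm x w := by
        rw [gnorm, gnorm, prod, prod,
          ← Real.sqrt_mul (show (0:ℝ) ≤ gP S.g x v v from S.prod_self_nonneg hx v)]

lemma gnorm_triangle (hx : x ∈ S.U) (v w : Vec N) :
    S.gnorm x (v + w) ≤ S.gnorm x v + S.gnorm x w := by
  have hexp : S.prod x (v + w) (v + w)
      = S.prod x v v + 2 * S.prod x v w + S.prod x w w := by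
    rw [prod, Aux.gP_add_left, Aux.gP_add_right, Aux.gP_add_right,
      Aux.gP_sym (S.hgsymm x hx) w v]
    ring_nf; rfl
  have hle : S.prod x (v + w) (v + w) ≤ (S.gnorm x v + S.gnorm x w) ^ 2 := by
    have h2 := S.abs_prod_le hx v w
    have := le_abs_self (S.prod x v w)
    have e1 := S.gnorm_sq hx v
    have e2 := S.gnorm_sq hx w
    nlinarith [hexp]
  calc S.gnorm x (v + w) = Real.sqrt (S.prod x (v + w) (v + w)) := rfl
    _ ≤ Real.sqrt ((S.gnorm x v + S.gnorm x w) ^ 2) := Real.sqrt_le_sqrt hle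
    _ = |S.gnorm x v + S.gnorm x w| := Real.sqrt_sq_eq_abs _
    _ = S.gnorm x v + S.gnorm x w :=
        abs_of_nonneg (add_nonneg (S.gnorm_nonneg x v) (S.gnorm_nonneg x w))

lemma gnorm_sub_le (hx : x ∈ S.U) (v w : Vec N) :
    S.gnorm x v ≤ S.gnorm x (v - w) + S.gnorm x w := by
  have : v = (v - w) + w := by ring_nf
  calc S.gnorm x v = S.gnorm x ((v - w) + w) := by rw [← this]
    _ ≤ _ := S.gnorm_triangle hx _ _

lemma gnorm_unit_le_one (hx : x ∈ S.U) (v : Vec N) :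
    S.gnorm x ((S.gnorm x v)⁻¹ • v) ≤ 1 := by
  rcases eq_or_ne v 0 with rfl | hv
  · rw [smul_zero, gnorm_zero]; norm_num
  · rw [gnorm_smul, abs_of_nonneg (inv_nonneg.2 (S.gnorm_nonneg x v)),
      inv_mul_cancel₀ (S.gnorm_pos hx hv).ne']

lemma gnorm_normalized_sub (hx : x ∈ S.U) {a u : Vec N} (ha : a ≠ 0) (hu : u ≠ 0) :
    S.gnorm x ((S.gnorm x a)⁻¹ • a - (S.gnorm x u)⁻¹ • u)
      ≤ 2 * S.gnorm x (a - u) / S.gnorm x a := by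
  have hA : 0 < S.gnorm x a := S.gnorm_pos hx ha
  have hU : 0 < S.gnorm x u := S.gnorm_pos hx hu
  set A := S.gnorm x a with hAdef
  set B := S.gnorm x u with hBdef
  have key : (A⁻¹ • a - B⁻¹ • u) = A⁻¹ • (a - u) + (A⁻¹ - B⁻¹) • u := by
    ext i; simp [Pi.smul_apply, Pi.sub_apply, Pi.add_apply, smul_eq_mul]; ring
  rw [key]
  have h1 : S.gnorm x (A⁻¹ • (a - u)) = A⁻¹ * S.gnorm x (a - u) := by
    rw [gnorm_smul, abs_of_nonneg (inv_nonneg.2 hA.le)]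
  have h2 : S.gnorm x ((A⁻¹ - B⁻¹) • u) = |A⁻¹ - B⁻¹| * B := by
    rw [gnorm_smul, ← hBdef]
  have hrev : |B - A| ≤ S.gnorm x (a - u) := by
    rw [abs_sub_le_iff]
    constructor
    · have := S.gnorm_sub_le hx u a
      have hn : S.gnorm x (u - a) = S.gnorm x (a - u) := by
        rw [show u - a = -(a - u) by ring_nf, gnorm_neg]
      rw [← hAdef, ← hBdef] at this
      linarith [hn ▸ this]
    · have := S.gnorm_sub_le hx a u
      rw [← hAdef, ← hBdef] at this
      linarith
  have h3 : |A⁻¹ - B⁻¹| * B = |B - A| / A := by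
    have : A⁻¹ - B⁻¹ = (B - A) / (A * B) := by field_simp
    rw [this, abs_div, abs_of_pos (by positivity : (0:ℝ) < A * B)]
    field_simp
  calc S.gnorm x (A⁻¹ • (a - u) + (A⁻¹ - B⁻¹) • u)
      ≤ S.gnorm x (A⁻¹ • (a - u)) + S.gnorm x ((A⁻¹ - B⁻¹) • u) :=
        S.gnorm_triangle hx _ _
    _ = A⁻¹ * S.gnorm x (a - u) + |B - A| / A := by rw [h1, h2, h3]
    _ ≤ A⁻¹ * S.gnorm x (a - u) + S.gnorm x (a - u) / A := by
        have := hrev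
        gcongr
    _ = 2 * S.gnorm x (a - u) / A := by field_simp; ring

end Setting

namespace Setting

variable (S : Setting N) {x : Vec N}

lemma posDef_g (hx : x ∈ S.U) : (S.g x).PosDef := by
  rw [Matrix.posDef_iff_dotProduct_mulVec]
  constructor
  · ext i j
    simp only [Matrix.conjTranspose_apply, star_trivial]
    exact S.hgsymm x hx j i
  · intro v hv
    have h := S.hgpos x hx v hv
    have : star v ⬝ᵥ (S.g x *ᵥ v) = gP S.g x v v := by
      simp only [dotProduct, Matrix.mulVec, gP, Pi.star_apply, star_trivial,
        Finset.mul_sum]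
      exact Finset.sum_congr rfl fun i _ => Finset.sum_congr rfl fun j _ => by ring
    rw [this]
    exact h

lemma det_g_pos (hx : x ∈ S.U) : 0 < (S.g x).det := (S.posDef_g hx).det_pos

end Setting

namespace Aux

/-- determinant of a matrix of `C^n` functions is `C^n`. -/
lemma contDiffOn_det {f : Vec N → Matrix (Fin N) (Fin N) ℝ} {U : Set (Vec N)}
    {n : WithTop ℕ∞} (h : ∀ i j, ContDiffOn ℝ n (fun x => f x i j) U) :
    ContDiffOn ℝ n (fun x => (f x).det) U := by
  simp_rw [Matrix.det_apply]
  apply ContDiffOn.sum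
  intro σ _
  have hp : ContDiffOn ℝ n (fun x => ∏ i, f x (σ i) i) U :=
    contDiffOn_prod fun i _ => h (σ i) i
  have : (fun x => Equiv.Perm.sign σ • ∏ i, f x (σ i) i)
      = fun x => ((Equiv.Perm.sign σ : ℤ) : ℝ) * ∏ i, f x (σ i) i := by
    funext y
    rw [Units.smul_def, zsmul_eq_mul]
  rw [this]
  exact (contDiffOn_const (c := ((Equiv.Perm.sign σ : ℤ) : ℝ))).mul hp

end Aux

namespace Setting

variable (S : Setting N)

lemma contDiffOn_adjugate (i j : Fin N) :
    ContDiffOn ℝ 3 (fun x => (S.g x).adjugate i j) S.U := by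
  simp_rw [Matrix.adjugate_apply]
  apply Aux.contDiffOn_det
  intro a b
  by_cases hab : a = j
  · subst hab
    simp only [Matrix.updateRow_self]
    exact contDiffOn_const
  · simp only [Matrix.updateRow_ne hab]
    exact S.hgC a b

lemma ginv_entry (x : Vec N) (i j : Fin N) :
    (S.g x)⁻¹ i j = ((S.g x).det)⁻¹ * (S.g x).adjugate i j := by
  rw [Matrix.inv_def, Ring.inverse_eq_inv', Matrix.smul_apply, smul_eq_mul]

lemma contDiffOn_ginv (i j : Fin N) :
    ContDiffOn ℝ 2 (fun x => (S.g x)⁻¹ i j) S.U := by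
  simp_rw [S.ginv_entry]
  have hdet : ContDiffOn ℝ 3 (fun x => (S.g x).det) S.U := Aux.contDiffOn_det S.hgC
  have hinv : ContDiffOn ℝ 3 (fun x => ((S.g x).det)⁻¹) S.U :=
    hdet.inv fun x hx => (S.det_g_pos hx).ne'
  exact (hinv.of_le (by norm_num)).mul ((S.contDiffOn_adjugate i j).of_le (by norm_num))

lemma contDiffOn_euclGrad (i : Fin N) :
    ContDiffOn ℝ 1 (fun x => euclGrad S.V x i) S.U := by
  have hfd : ContDiffOn ℝ 1 (fderiv ℝ S.V) S.U :=
    S.hVC.fderiv_of_isOpen S.hU (by norm_num)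
  have happ : ContDiff ℝ 1 (fun L : Vec N →L[ℝ] ℝ => L (Pi.single i 1)) :=
    contDiff_id.clm_apply contDiff_const
  exact happ.comp_contDiffOn hfd

lemma contDiffOn_gder (l j i : Fin N) :
    ContDiffOn ℝ 1 (fun x => fderiv ℝ (fun y => S.g y l j) x (Pi.single i 1)) S.U := by
  have hfd : ContDiffOn ℝ 2 (fderiv ℝ (fun y => S.g y l j)) S.U :=
    (S.hgC l j).fderiv_of_isOpen S.hU (by norm_num)
  have happ : ContDiff ℝ 1 (fun L : Vec N →L[ℝ] ℝ => L (Pi.single i 1)) :=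
    contDiff_id.clm_apply contDiff_const
  exact happ.comp_contDiffOn (hfd.of_le (by norm_num))

lemma contDiffOn_grad : ContDiffOn ℝ 1 (fun x => S.grad x) S.U := by
  rw [contDiffOn_pi]
  intro i
  have : (fun x => S.grad x i) = fun x => ∑ j, (S.g x)⁻¹ i j * euclGrad S.V x j := by
    funext x
    rw [grad, Matrix.mulVec, dotProduct]
  rw [this]
  apply ContDiffOn.sum
  intro j _
  exact ((S.contDiffOn_ginv i j).of_le (by norm_num)).mul (S.contDiffOn_euclGrad j)

lemma continuousOn_christoffel (k i j : Fin N) :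
    ContinuousOn (fun x => S.christoffel x k i j) S.U := by
  unfold christoffel
  apply ContinuousOn.mul continuousOn_const
  apply continuousOn_finset_sum
  intro l _
  apply ContinuousOn.mul ((S.contDiffOn_ginv k l).continuousOn)
  apply ContinuousOn.sub
  apply ContinuousOn.add
  · exact (S.contDiffOn_gder l j i).continuousOn
  · exact (S.contDiffOn_gder l i j).continuousOn
  · exact (S.contDiffOn_gder i j l).continuousOn

end Setting


namespace Aux

lemma double_sum_bound {N : ℕ} (h : Fin N → Fin N → ℝ) (a b : Vec N) :
    |∑ i, ∑ j, h i j * a i * b j| ≤ (∑ i, ∑ j, |h i j|) * (‖a‖ * ‖b‖) := by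
  calc |∑ i, ∑ j, h i j * a i * b j| ≤ ∑ i, |∑ j, h i j * a i * b j| :=
        Finset.abs_sum_le_sum_abs _ _
    _ ≤ ∑ i, ∑ j, |h i j * a i * b j| :=
        Finset.sum_le_sum fun i _ => Finset.abs_sum_le_sum_abs _ _
    _ ≤ ∑ i, ∑ j, |h i j| * (‖a‖ * ‖b‖) := by
        refine Finset.sum_le_sum fun i _ => Finset.sum_le_sum fun j _ => ?_
        rw [abs_mul, abs_mul, mul_assoc]
        have h1 : |a i| ≤ ‖a‖ := by rw [← Real.norm_eq_abs]; exact norm_le_pi_norm a i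
        have h2 : |b j| ≤ ‖b‖ := by rw [← Real.norm_eq_abs]; exact norm_le_pi_norm b j
        exact mul_le_mul_of_nonneg_left
          (mul_le_mul h1 h2 (abs_nonneg _) (norm_nonneg _)) (abs_nonneg _)
    _ = (∑ i, ∑ j, |h i j|) * (‖a‖ * ‖b‖) := by
        rw [Finset.sum_mul]
        exact Finset.sum_congr rfl fun i _ => (Finset.sum_mul _ _ _).symm

end Aux

set_option maxHeartbeats 4000000 in
/-- **Lemma 2.2**: uniform estimate on the angle between `∇V(q(t))` and `-q̇(t)` for
solutions of Newton's equation starting at rest on `V⁻¹(E)`. -/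
theorem orth_cond {N : ℕ} (S : Setting N) :
    ∃ C > (0:ℝ), ∀ t₀ > (0:ℝ), ∀ q q' q'' : ℝ → Vec N,
      C2OnWith q q' q'' (Icc 0 t₀) →
      (∀ t ∈ Icc 0 t₀, ∀ k, S.covD q q' q' q'' t k + S.grad (q t) k = 0) →
      S.V (q 0) = S.E → q' 0 = 0 →
      (∀ t ∈ Ioc 0 t₀, S.V (q t) < S.E) →
      ∀ t ∈ Ioc 0 t₀,
        S.gnorm (q t)
          ((S.gnorm (q t) (S.grad (q t)))⁻¹ • S.grad (q t)
            + (S.gnorm (q t) (q' t))⁻¹ • q' t) ≤ C * t := by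
  classical
  by_cases hne : {x : Vec N | S.V x = S.E}.Nonempty
  swap
  · refine ⟨1, one_pos, fun t₀ ht₀ q q' q'' hC2 hEq hV0 hq'0 hVlt t ht => ?_⟩
    exact absurd ⟨q 0, hV0⟩ hne
  -- notation
  set K := {x : Vec N | S.V x ≤ S.E} with hKdef
  have hKc : IsCompact K := S.hcomp
  have hKU : K ⊆ S.U := S.hsub
  have hKne : K.Nonempty := ⟨hne.choose, le_of_eq hne.choose_spec⟩
  -- the boundary Σ
  set Sig := {x : Vec N | S.V x = S.E} with hSigdef
  have hSigK : Sig ⊆ K := fun x hx => le_of_eq hx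
  have hSigc : IsCompact Sig := by
    have heq : Sig = K ∩ S.V ⁻¹' {S.E} := by
      ext x; constructor
      · intro hx; exact ⟨le_of_eq hx, hx⟩
      · intro hx; exact hx.2
    rw [heq]
    exact hKc.of_isClosed_subset
      (ContinuousOn.preimage_isClosed_of_isClosed
        ((S.hVC.continuousOn).mono hKU) hKc.isClosed isClosed_singleton)
      inter_subset_left
  -- bound on ‖grad‖ over K
  obtain ⟨gb₀, hgb₀⟩ := hKc.exists_bound_of_continuousOn
    (S.contDiffOn_grad.continuousOn.mono hKU)
  set gb := max gb₀ 0 with hgbdef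
  have hgb : ∀ x ∈ K, ‖S.grad x‖ ≤ gb := fun x hx => (hgb₀ x hx).trans (le_max_left _ _)
  have hgb0 : 0 ≤ gb := le_max_right _ _
  clear_value gb
  -- bound on ‖fderiv grad‖ over K
  obtain ⟨Db₀, hDb₀⟩ := hKc.exists_bound_of_continuousOn
    ((S.contDiffOn_grad.continuousOn_fderiv_of_isOpen S.hU (le_refl 1)).mono hKU)
  set Db := max Db₀ 0 with hDbdef
  have hDb : ∀ x ∈ K, ‖fderiv ℝ (fun y => S.grad y) x‖ ≤ Db := fun x hx =>
    (hDb₀ x hx).trans (le_max_left _ _)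
  have hDb0 : 0 ≤ Db := le_max_right _ _
  clear_value Db
  -- bound on the Christoffel symbols over K
  obtain ⟨Γb₀, hΓb₀⟩ := hKc.exists_bound_of_continuousOn
    (f := fun x => ∑ k, ∑ i, ∑ j, |S.christoffel x k i j|) (by
      apply continuousOn_finset_sum; intro k _
      apply continuousOn_finset_sum; intro i _
      apply continuousOn_finset_sum; intro j _
      exact ((S.continuousOn_christoffel k i j).mono hKU).abs)
  set Γb := max Γb₀ 0 with hΓbdef
  have hΓb0 : 0 ≤ Γb := le_max_right _ _
  have hΓsum : ∀ x ∈ K, ∀ k, ∑ i, ∑ j, |S.christoffel x k i j| ≤ Γb := by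
    intro x hx k
    have h1 : ∑ i, ∑ j, |S.christoffel x k i j|
        ≤ ∑ k, ∑ i, ∑ j, |S.christoffel x k i j| := by
      apply Finset.single_le_sum (f := fun k => ∑ i, ∑ j, |S.christoffel x k i j|)
        (fun k _ => by positivity) (Finset.mem_univ k)
    refine h1.trans ?_
    refine le_trans (le_abs_self _) ?_
    refine le_trans ?_ (le_max_left Γb₀ 0)
    exact (Real.norm_eq_abs _) ▸ hΓb₀ x hx
  -- upper comparison between the g-norm and the sup norm
  obtain ⟨Gb₀, hGb₀⟩ := hKc.exists_bound_of_continuousOn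
    (f := fun x => ∑ i, ∑ j, |S.g x i j|) (by
      apply continuousOn_finset_sum; intro i _
      apply continuousOn_finset_sum; intro j _
      exact ((S.hgC i j).continuousOn.mono hKU).abs)
  set CU := Real.sqrt (max Gb₀ 0) with hCUdef
  have hCU0 : 0 ≤ CU := Real.sqrt_nonneg _
  have hupper : ∀ x ∈ K, ∀ v : Vec N, S.gnorm x v ≤ CU * ‖v‖ := by
    intro x hx v
    have h1 : gP S.g x v v ≤ (max Gb₀ 0) * (‖v‖ * ‖v‖) := by
      refine le_trans (le_abs_self _) ?_
      refine le_trans (Aux.double_sum_bound (fun i j => S.g x i j) v v) ?_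
      have h2 : ∑ i, ∑ j, |S.g x i j| ≤ max Gb₀ 0 :=
        le_trans (le_abs_self _) (le_trans ((Real.norm_eq_abs _) ▸ hGb₀ x hx)
          (le_max_left _ _))
      have : (0:ℝ) ≤ ‖v‖ * ‖v‖ := by positivity
      nlinarith
    calc S.gnorm x v = Real.sqrt (gP S.g x v v) := rfl
      _ ≤ Real.sqrt ((max Gb₀ 0) * (‖v‖ * ‖v‖)) := Real.sqrt_le_sqrt h1
      _ = CU * ‖v‖ := by
          rw [Real.sqrt_mul (le_max_right Gb₀ 0), Real.sqrt_mul_self (norm_nonneg v)]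
  -- lower comparison between the g-norm and the sup norm
  have hnorm1 : ∀ v : Vec N, v ≠ 0 → ‖‖v‖⁻¹ • v‖ = 1 := by
    intro v hv
    rw [norm_smul, norm_inv, norm_norm, inv_mul_cancel₀ (norm_ne_zero_iff.2 hv)]
  have hlowc : ∃ sql > 0, ∀ x ∈ K, ∀ v : Vec N, sql * ‖v‖ ≤ S.gnorm x v := by
    obtain ⟨v₁, hv₁⟩ : ∃ v : Vec N, v ≠ 0 := by
      refine ⟨Pi.single ⟨0, S.hdim⟩ 1, fun h => ?_⟩
      have := congrFun h ⟨0, S.hdim⟩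
      simp [Pi.single_eq_same] at this
    have hsphc : IsCompact (Metric.sphere (0 : Vec N) 1) := isCompact_sphere _ _
    have hsphne : (Metric.sphere (0 : Vec N) 1).Nonempty :=
      ⟨‖v₁‖⁻¹ • v₁, by rw [mem_sphere_zero_iff_norm]; exact hnorm1 v₁ hv₁⟩
    have hPc : IsCompact (K ×ˢ Metric.sphere (0 : Vec N) 1) := hKc.prod hsphc
    have hPne : (K ×ˢ Metric.sphere (0 : Vec N) 1).Nonempty := hKne.prod hsphne
    have hfP : ContinuousOn (fun p : Vec N × Vec N => gP S.g p.1 p.2 p.2)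
        (K ×ˢ Metric.sphere (0 : Vec N) 1) := by
      simp only [gP]
      apply continuousOn_finset_sum; intro i _
      apply continuousOn_finset_sum; intro j _
      apply ContinuousOn.mul
      apply ContinuousOn.mul
      · exact ((S.hgC i j).continuousOn.mono hKU).comp continuousOn_fst
          (fun p hp => hp.1)
      · exact ((continuous_apply i).comp continuous_snd).continuousOn
      · exact ((continuous_apply j).comp continuous_snd).continuousOn
    obtain ⟨p₀, hp₀P, hp₀min'⟩ := hPc.exists_isMinOn hPne hfP
    have hp₀min := isMinOn_iff.1 hp₀min'
    have hp₀2 : p₀.2 ≠ 0 := by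
      have h1 : ‖p₀.2‖ = 1 := by
        have := hp₀P.2; rwa [mem_sphere_zero_iff_norm] at this
      intro h; rw [h, norm_zero] at h1; norm_num at h1
    have hlam0 : 0 < gP S.g p₀.1 p₀.2 p₀.2 := S.hgpos p₀.1 (hKU hp₀P.1) p₀.2 hp₀2
    refine ⟨Real.sqrt (gP S.g p₀.1 p₀.2 p₀.2), Real.sqrt_pos.2 hlam0, ?_⟩
    intro x hx v
    rcases eq_or_ne v 0 with rfl | hv
    · rw [norm_zero, mul_zero]
      exact S.gnorm_nonneg x 0
    · have hw : (‖v‖⁻¹ • v) ∈ Metric.sphere (0 : Vec N) 1 := by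
        rw [mem_sphere_zero_iff_norm]; exact hnorm1 v hv
      have hmin := hp₀min (x, ‖v‖⁻¹ • v) ⟨hx, hw⟩
      have hvw : v = ‖v‖ • (‖v‖⁻¹ • v) := by
        rw [smul_smul, mul_inv_cancel₀ (norm_ne_zero_iff.2 hv), one_smul]
      have hQ : gP S.g x v v = ‖v‖ ^ 2 * gP S.g x (‖v‖⁻¹ • v) (‖v‖⁻¹ • v) := by
        conv_lhs => rw [hvw]
        exact Aux.gP_smul_self _ _
      have h2 : gP S.g p₀.1 p₀.2 p₀.2 * ‖v‖ ^ 2 ≤ gP S.g x v v := by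
        rw [hQ]; nlinarith [hmin, sq_nonneg ‖v‖]
      calc Real.sqrt (gP S.g p₀.1 p₀.2 p₀.2) * ‖v‖
          = Real.sqrt (gP S.g p₀.1 p₀.2 p₀.2 * ‖v‖ ^ 2) := by
            rw [Real.sqrt_mul hlam0.le, Real.sqrt_sq (norm_nonneg v)]
        _ ≤ Real.sqrt (gP S.g x v v) := Real.sqrt_le_sqrt h2
        _ = S.gnorm x v := rfl
  obtain ⟨sql, hsql, hlower⟩ := hlowc
  -- lower bound for the gradient on the boundary
  have hdelta : ∃ δ > 0, ∀ x ∈ Sig, δ ≤ ‖S.grad x‖ := by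
    have hc : ContinuousOn (fun x => ‖S.grad x‖) Sig :=
      (S.contDiffOn_grad.continuousOn.mono (hSigK.trans hKU)).norm
    obtain ⟨x₁, hx₁, hmin'⟩ := hSigc.exists_isMinOn hne hc
    have hmin := isMinOn_iff.1 hmin'
    have hgradne : S.grad x₁ ≠ 0 := by
      intro h0
      have hU₁ : x₁ ∈ S.U := hKU (hSigK hx₁)
      have hunit : IsUnit (S.g x₁).det := isUnit_iff_ne_zero.2 (S.det_g_pos hU₁).ne'
      have heg : S.g x₁ *ᵥ S.grad x₁ = euclGrad S.V x₁ := by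
        rw [Setting.grad, Matrix.mulVec_mulVec, Matrix.mul_nonsing_inv _ hunit,
          Matrix.one_mulVec]
      rw [h0, Matrix.mulVec_zero] at heg
      exact S.hreg x₁ hx₁ heg.symm
    exact ⟨‖S.grad x₁‖, norm_pos_iff.2 hgradne, hmin⟩
  obtain ⟨δ, hδ, hδlow⟩ := hdelta
  -- derived constants
  have hΓbclear : True := trivial
  clear_value Γb
  obtain ⟨M, hMdef⟩ : ∃ M : ℝ, M = gb + Γb + 1 := ⟨_, rfl⟩
  have hM0 : 0 < M := by rw [hMdef]; positivity
  obtain ⟨c₂, hc₂def⟩ : ∃ c : ℝ, c = Db * M + Γb * M ^ 2 := ⟨_, rfl⟩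
  have hc₂0 : 0 ≤ c₂ := by rw [hc₂def]; positivity
  obtain ⟨c₃, hc₃def⟩ : ∃ c : ℝ, c = Db * M + c₂ := ⟨_, rfl⟩
  have hc₃0 : 0 ≤ c₃ := by
    rw [hc₃def]; positivity
  obtain ⟨T, hTdef⟩ :
      ∃ T : ℝ, T = min 1 (min (1 / (2 * M + 2)) (δ / (2 * (Db * M + c₂ + 1)))) := ⟨_, rfl⟩
  have hT0 : 0 < T := by
    rw [hTdef]
    refine lt_min one_pos (lt_min (by positivity) (by positivity))
  have hT1 : T ≤ 1 := hTdef ▸ min_le_left _ _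
  have hTM : M * T ≤ 1 / 2 := by
    have h1 : T ≤ 1 / (2 * M + 2) := hTdef ▸ le_trans (min_le_right _ _) (min_le_left _ _)
    rw [le_div_iff₀ (by positivity)] at h1
    nlinarith
  have hTδ : (Db * M + c₂ + 1) * T ≤ δ / 2 := by
    have h1 : T ≤ δ / (2 * (Db * M + c₂ + 1)) :=
      hTdef ▸ le_trans (min_le_right _ _) (min_le_right _ _)
    rw [le_div_iff₀ (by positivity)] at h1
    have h2 : (Db * M + c₂ + 1) * T = (T * (2 * (Db * M + c₂ + 1))) / 2 := by ring
    rw [h2]; linarith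
  obtain ⟨Cb, hCbdef⟩ : ∃ C : ℝ, C = max (2 / T) (4 * CU * c₃ / (sql * δ)) := ⟨_, rfl⟩
  have hCb0 : 0 < Cb := by
    rw [hCbdef]; exact lt_max_of_lt_left (by positivity)
  refine ⟨Cb, hCb0, ?_⟩
  intro t₀ ht₀ q q' q'' hC2 hEq hV0 hq'0 hVlt t ht
  obtain ⟨hq, hq', hq''c⟩ := hC2
  have hqK : ∀ u ∈ Icc (0:ℝ) t₀, q u ∈ K := by
    intro u hu
    rw [hKdef, mem_setOf_eq]
    rcases eq_or_lt_of_le hu.1 with h0 | h0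
    · rw [← h0]; exact le_of_eq hV0
    · exact (hVlt u ⟨h0, hu.2⟩).le
  have hqU : ∀ u ∈ Icc (0:ℝ) t₀, q u ∈ S.U := fun u hu => hKU (hqK u hu)
  have hq''eq : ∀ u ∈ Icc (0:ℝ) t₀, q'' u = fun k =>
      -(S.grad (q u) k) - ∑ i, ∑ j, S.christoffel (q u) k i j * q' u i * q' u j := by
    intro u hu
    funext k
    have h := hEq u hu k
    have hcov : S.covD q q' q' q'' u k
        = q'' u k + ∑ i, ∑ j, S.christoffel (q u) k i j * q' u i * q' u j := rfl
    rw [hcov] at h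
    linarith
  have hq''bd : ∀ u ∈ Icc (0:ℝ) t₀, ‖q' u‖ ≤ 1 → ‖q'' u‖ ≤ M := by
    intro u hu h1
    rw [hq''eq u hu, pi_norm_le_iff_of_nonneg hM0.le]
    intro k
    have h2 : |S.grad (q u) k| ≤ gb := by
      have h := norm_le_pi_norm (S.grad (q u)) k
      rw [Real.norm_eq_abs] at h
      exact h.trans (hgb _ (hqK u hu))
    have h3 : |∑ i, ∑ j, S.christoffel (q u) k i j * q' u i * q' u j|
        ≤ (∑ i, ∑ j, |S.christoffel (q u) k i j|) * (‖q' u‖ * ‖q' u‖) := by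
      simpa using Aux.double_sum_bound (fun i j => S.christoffel (q u) k i j) (q' u) (q' u)
    have h4 := hΓsum _ (hqK u hu) k
    have h6 : |∑ i, ∑ j, S.christoffel (q u) k i j * q' u i * q' u j| ≤ Γb := by
      have hnn : (0:ℝ) ≤ ∑ i, ∑ j, |S.christoffel (q u) k i j| := by positivity
      have h5 : ‖q' u‖ * ‖q' u‖ ≤ 1 :=
        mul_le_one₀ h1 (norm_nonneg _) h1
      have h5' : (∑ i, ∑ j, |S.christoffel (q u) k i j|) * (‖q' u‖ * ‖q' u‖)
          ≤ ∑ i, ∑ j, |S.christoffel (q u) k i j| := mul_le_of_le_one_right hnn h5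
      linarith only [h3, h5', h4]
    rw [Real.norm_eq_abs]
    have heq2 : -(S.grad (q u) k) - (∑ i, ∑ j, S.christoffel (q u) k i j * q' u i * q' u j)
        = -((S.grad (q u) k) + ∑ i, ∑ j, S.christoffel (q u) k i j * q' u i * q' u j) := by
      ring
    rw [heq2, abs_neg]
    calc |(S.grad (q u) k) + ∑ i, ∑ j, S.christoffel (q u) k i j * q' u i * q' u j|
        ≤ |S.grad (q u) k| + |∑ i, ∑ j, S.christoffel (q u) k i j * q' u i * q' u j| :=
          abs_add_le _ _
      _ ≤ gb + Γb := add_le_add h2 h6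
      _ ≤ M := by rw [hMdef]; linarith only []
  have hq'cont : ContinuousOn q' (Icc 0 t₀) := fun u hu => (hq' u hu).continuousWithinAt
  obtain ⟨T', hT'def⟩ : ∃ x : ℝ, x = min T t₀ := ⟨_, rfl⟩
  have hT'pos : 0 < T' := hT'def ▸ lt_min hT0 ht₀
  have hT't₀ : T' ≤ t₀ := hT'def ▸ min_le_right _ _
  have hT'T : T' ≤ T := hT'def ▸ min_le_left _ _
  have hsubT : Icc (0:ℝ) T' ⊆ Icc 0 t₀ := Icc_subset_Icc_right hT't₀
  -- bootstrap bound on the velocity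
  have key1 : ∀ s ∈ Icc (0:ℝ) T', ‖q' s‖ ≤ 1 := by
    by_contra hcon
    push_neg at hcon
    obtain ⟨s₂, hs₂mem, hs₂gt⟩ := hcon
    have hBne : {s | s ∈ Icc (0:ℝ) T' ∧ 1 ≤ ‖q' s‖}.Nonempty := ⟨s₂, hs₂mem, hs₂gt.le⟩
    have hBsub : {s | s ∈ Icc (0:ℝ) T' ∧ 1 ≤ ‖q' s‖} ⊆ Icc 0 T' := fun s hs => hs.1
    have hBclosed : IsClosed {s | s ∈ Icc (0:ℝ) T' ∧ 1 ≤ ‖q' s‖} := by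
      have heq : {s | s ∈ Icc (0:ℝ) T' ∧ 1 ≤ ‖q' s‖}
          = Icc (0:ℝ) T' ∩ (fun s => ‖q' s‖) ⁻¹' Ici 1 := rfl
      rw [heq]
      exact ContinuousOn.preimage_isClosed_of_isClosed
        ((hq'cont.mono hsubT).norm) isClosed_Icc isClosed_Ici
    have hBcomp : IsCompact {s | s ∈ Icc (0:ℝ) T' ∧ 1 ≤ ‖q' s‖} :=
      isCompact_Icc.of_isClosed_subset hBclosed hBsub
    have hs₁B := hBcomp.sInf_mem hBne
    obtain ⟨s₁, hs₁def⟩ : ∃ x : ℝ, x = sInf {s | s ∈ Icc (0:ℝ) T' ∧ 1 ≤ ‖q' s‖} := ⟨_, rfl⟩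
    rw [← hs₁def] at hs₁B
    have hs₁mem : s₁ ∈ Icc (0:ℝ) T' := hs₁B.1
    have hs₁pos : 0 < s₁ := by
      rcases eq_or_lt_of_le hs₁mem.1 with h0 | h0
      · exfalso; have h := hs₁B.2; rw [← h0, hq'0, norm_zero] at h; linarith
      · exact h0
    have hlt : ∀ s ∈ Ico (0:ℝ) s₁, ‖q' s‖ < 1 := by
      intro s hs
      by_contra hge
      push_neg at hge
      have hsB : s ∈ {s | s ∈ Icc (0:ℝ) T' ∧ 1 ≤ ‖q' s‖} :=
        ⟨⟨hs.1, hs.2.le.trans hs₁mem.2⟩, hge⟩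
      have := csInf_le hBcomp.bddBelow hsB
      rw [← hs₁def] at this
      exact absurd this (not_le.2 hs.2)
    have hle1 : ∀ s ∈ Icc (0:ℝ) s₁, ‖q' s‖ ≤ 1 := by
      intro s hs
      rcases lt_or_eq_of_le hs.2 with h | h
      · exact (hlt s ⟨hs.1, h⟩).le
      · subst h
        have hclos : s ∈ closure (Ico (0:ℝ) s) := by
          rw [closure_Ico hs₁pos.ne]
          exact ⟨hs₁pos.le, le_refl _⟩
        have hnb : (nhdsWithin s (Ico (0:ℝ) s)).NeBot :=
          mem_closure_iff_nhdsWithin_neBot.1 hclos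
        have hmono : Ico (0:ℝ) s ⊆ Icc 0 t₀ :=
          fun y hy => hsubT ⟨hy.1, hy.2.le.trans hs₁mem.2⟩
        have htd : Filter.Tendsto (fun r => ‖q' r‖) (nhdsWithin s (Ico (0:ℝ) s))
            (nhds ‖q' s‖) := ((hq'cont s (hsubT hs₁mem)).mono hmono).norm
        refine le_of_tendsto htd ?_
        exact eventually_nhdsWithin_of_forall (fun r hr => (hlt r hr).le)
    have hsub2 : Icc (0:ℝ) s₁ ⊆ Icc 0 t₀ := fun u hu => hsubT ⟨hu.1, hu.2.trans hs₁mem.2⟩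
    have hmv := Convex.norm_image_sub_le_of_norm_hasDerivWithin_le
      (fun u hu => (hq' u (hsub2 hu)).mono hsub2)
      (fun u hu => hq''bd u (hsub2 hu) (hle1 u hu))
      (convex_Icc 0 s₁) (left_mem_Icc.2 hs₁pos.le) (right_mem_Icc.2 hs₁pos.le)
    rw [hq'0, sub_zero, sub_zero, Real.norm_of_nonneg hs₁pos.le] at hmv
    have h1 : (1:ℝ) ≤ M * s₁ := le_trans hs₁B.2 hmv
    have hs₁T : s₁ ≤ T := hs₁mem.2.trans hT'T
    have h2 : M * s₁ ≤ M * T := mul_le_mul_of_nonneg_left hs₁T hM0.le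
    linarith only [h1, h2, hTM]
  have hMbd : ∀ u ∈ Icc (0:ℝ) T', ‖q'' u‖ ≤ M := fun u hu => hq''bd u (hsubT hu) (key1 u hu)
  have hlin : ∀ s ∈ Icc (0:ℝ) T', ‖q' s‖ ≤ M * s := by
    intro s hs
    have hmv := Convex.norm_image_sub_le_of_norm_hasDerivWithin_le
      (fun u hu => (hq' u (hsubT hu)).mono hsubT) hMbd
      (convex_Icc 0 T') (left_mem_Icc.2 hT'pos.le) hs
    rw [hq'0, sub_zero, sub_zero, Real.norm_of_nonneg hs.1] at hmv
    exact hmv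
  have hgd : ∀ s ∈ Icc (0:ℝ) T', ‖S.grad (q s) - S.grad (q 0)‖ ≤ Db * (M * s) * s := by
    intro s hs
    have hsub3 : Icc (0:ℝ) s ⊆ Icc 0 T' := Icc_subset_Icc_right hs.2
    have hsub4 : Icc (0:ℝ) s ⊆ Icc 0 t₀ := fun z hz => hsubT (hsub3 hz)
    have hdrv : ∀ u ∈ Icc (0:ℝ) s, HasDerivWithinAt (fun r => S.grad (q r))
        ((fderiv ℝ (fun y => S.grad y) (q u)) (q' u)) (Icc 0 s) u := by
      intro u hu
      have hqu : HasDerivWithinAt q (q' u) (Icc 0 s) u := (hq u (hsub4 hu)).mono hsub4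
      have hdiffAt : DifferentiableAt ℝ (fun y => S.grad y) (q u) := by
        have hmem : S.U ∈ nhds (q u) := S.hU.mem_nhds (hqU u (hsub4 hu))
        exact (S.contDiffOn_grad.differentiableOn one_ne_zero).differentiableAt hmem
      exact hdiffAt.hasFDerivAt.comp_hasDerivWithinAt u hqu
    have hbd : ∀ u ∈ Icc (0:ℝ) s,
        ‖(fderiv ℝ (fun y => S.grad y) (q u)) (q' u)‖ ≤ Db * (M * s) := by
      intro u hu
      calc ‖(fderiv ℝ (fun y => S.grad y) (q u)) (q' u)‖
          ≤ ‖fderiv ℝ (fun y => S.grad y) (q u)‖ * ‖q' u‖ :=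
            ContinuousLinearMap.le_opNorm _ _
        _ ≤ Db * (M * s) := by
            have h1 := hDb _ (hqK u (hsub4 hu))
            have h2 : ‖q' u‖ ≤ M * s :=
              le_trans (hlin u (hsub3 hu)) (mul_le_mul_of_nonneg_left hu.2 hM0.le)
            exact mul_le_mul h1 h2 (norm_nonneg _) hDb0
    have hmv := Convex.norm_image_sub_le_of_norm_hasDerivWithin_le hdrv hbd
      (convex_Icc 0 s) (left_mem_Icc.2 hs.1) (right_mem_Icc.2 hs.1)
    rw [sub_zero, Real.norm_of_nonneg hs.1] at hmv
    exact hmv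
  have hwest : ∀ s ∈ Icc (0:ℝ) T',
      ‖q' s + s • S.grad (q 0)‖ ≤ c₂ * (s * s) * s := by
    intro s hs
    have hsub3 : Icc (0:ℝ) s ⊆ Icc 0 T' := Icc_subset_Icc_right hs.2
    have hsub4 : Icc (0:ℝ) s ⊆ Icc 0 t₀ := fun z hz => hsubT (hsub3 hz)
    have hdrv : ∀ u ∈ Icc (0:ℝ) s, HasDerivWithinAt (fun r => q' r + r • S.grad (q 0))
        (q'' u + S.grad (q 0)) (Icc 0 s) u := by
      intro u hu
      have h1 : HasDerivWithinAt q' (q'' u) (Icc 0 s) u := (hq' u (hsub4 hu)).mono hsub4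
      have h2 : HasDerivAt (fun r : ℝ => r • S.grad (q 0)) ((1:ℝ) • S.grad (q 0)) u :=
        (hasDerivAt_id u).smul_const (S.grad (q 0))
      have h2' := h2.hasDerivWithinAt (s := Icc (0:ℝ) s)
      rw [one_smul] at h2'
      exact h1.add h2'
    have hbd : ∀ u ∈ Icc (0:ℝ) s, ‖q'' u + S.grad (q 0)‖ ≤ c₂ * (s * s) := by
      intro u hu
      have humem : u ∈ Icc (0:ℝ) T' := hsub3 hu
      have hu₀ : u ∈ Icc (0:ℝ) t₀ := hsubT humem
      have hsplit : q'' u + S.grad (q 0) = (S.grad (q 0) - S.grad (q u))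
          + (-(fun k => ∑ i, ∑ j, S.christoffel (q u) k i j * q' u i * q' u j) : Vec N) := by
        rw [hq''eq u hu₀]
        funext k
        simp only [Pi.add_apply, Pi.sub_apply, Pi.neg_apply]
        ring
      rw [hsplit]
      have hb1 : ‖S.grad (q 0) - S.grad (q u)‖ ≤ Db * (M * u) * u := by
        rw [norm_sub_rev]; exact hgd u humem
      have hb2 : ‖(-(fun k => ∑ i, ∑ j, S.christoffel (q u) k i j * q' u i * q' u j)
          : Vec N)‖ ≤ Γb * (M * u) ^ 2 := by
        rw [norm_neg, pi_norm_le_iff_of_nonneg (mul_nonneg hΓb0 (sq_nonneg _))]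
        intro k
        rw [Real.norm_eq_abs]
        have h3 : |∑ i, ∑ j, S.christoffel (q u) k i j * q' u i * q' u j|
            ≤ (∑ i, ∑ j, |S.christoffel (q u) k i j|) * (‖q' u‖ * ‖q' u‖) := by
          simpa using Aux.double_sum_bound (fun i j => S.christoffel (q u) k i j)
            (q' u) (q' u)
        have h4 := hΓsum _ (hqK u hu₀) k
        have h5 := hlin u humem
        have h6 : (0:ℝ) ≤ ‖q' u‖ := norm_nonneg _
        have h7 : (0:ℝ) ≤ ∑ i, ∑ j, |S.christoffel (q u) k i j| := by positivity
        have h9 : ‖q' u‖ * ‖q' u‖ ≤ (M * u) * (M * u) := mul_self_le_mul_self h6 h5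
        have h10 : (∑ i, ∑ j, |S.christoffel (q u) k i j|) * (‖q' u‖ * ‖q' u‖)
            ≤ Γb * ((M * u) * (M * u)) :=
          mul_le_mul h4 h9 (mul_nonneg h6 h6) hΓb0
        have h11 : (M * u) ^ 2 = (M * u) * (M * u) := sq (M * u)
        rw [h11]
        linarith only [h3, h10]
      have hu2 : u * u ≤ s * s := mul_self_le_mul_self hu.1 hu.2
      calc ‖(S.grad (q 0) - S.grad (q u))
            + (-(fun k => ∑ i, ∑ j, S.christoffel (q u) k i j * q' u i * q' u j) : Vec N)‖
          ≤ ‖S.grad (q 0) - S.grad (q u)‖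
            + ‖(-(fun k => ∑ i, ∑ j, S.christoffel (q u) k i j * q' u i * q' u j) : Vec N)‖ :=
            norm_add_le _ _
        _ ≤ Db * (M * u) * u + Γb * (M * u) ^ 2 := add_le_add hb1 hb2
        _ ≤ c₂ * (s * s) := by
            rw [hc₂def]
            have h10 : Db * (M * u) * u + Γb * (M * u) ^ 2
                = (Db * M + Γb * M ^ 2) * (u * u) := by ring
            rw [h10]
            exact mul_le_mul_of_nonneg_left hu2
              (add_nonneg (mul_nonneg hDb0 hM0.le) (mul_nonneg hΓb0 (sq_nonneg M)))
    have hmv := Convex.norm_image_sub_le_of_norm_hasDerivWithin_le hdrv hbd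
      (convex_Icc 0 s) (left_mem_Icc.2 hs.1) (right_mem_Icc.2 hs.1)
    simp only [hq'0, zero_smul, add_zero, sub_zero] at hmv
    rw [Real.norm_of_nonneg hs.1] at hmv
    exact hmv
  -- final estimate
  rcases le_or_gt T t with hTt | htT
  · -- away from the start: trivial bound
    have hxU : q t ∈ S.U := hqU t ⟨ht.1.le, ht.2⟩
    have h2 : S.gnorm (q t) ((S.gnorm (q t) (S.grad (q t)))⁻¹ • S.grad (q t)
        + (S.gnorm (q t) (q' t))⁻¹ • q' t) ≤ 2 := by
      calc S.gnorm (q t) ((S.gnorm (q t) (S.grad (q t)))⁻¹ • S.grad (q t)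
            + (S.gnorm (q t) (q' t))⁻¹ • q' t)
          ≤ S.gnorm (q t) ((S.gnorm (q t) (S.grad (q t)))⁻¹ • S.grad (q t))
            + S.gnorm (q t) ((S.gnorm (q t) (q' t))⁻¹ • q' t) := S.gnorm_triangle hxU _ _
        _ ≤ 1 + 1 := add_le_add (S.gnorm_unit_le_one hxU _) (S.gnorm_unit_le_one hxU _)
        _ = 2 := by norm_num
    have h3 : (2:ℝ) ≤ Cb * t := by
      have h4 : 2 / T ≤ Cb := hCbdef ▸ le_max_left _ _
      have h5 : (2:ℝ) = (2/T) * T := (div_mul_cancel₀ (2:ℝ) hT0.ne').symm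
      calc (2:ℝ) = (2/T) * T := h5
        _ ≤ (2/T) * t := mul_le_mul_of_nonneg_left hTt (div_pos two_pos hT0).le
        _ ≤ Cb * t := mul_le_mul_of_nonneg_right h4 ht.1.le
    linarith only [h2, h3]
  · -- near the start: the real estimate
    have htmem : t ∈ Icc (0:ℝ) T' := ⟨ht.1.le, hT'def ▸ le_min htT.le ht.2⟩
    have ht0 : 0 < t := ht.1
    have hxK : q t ∈ K := hqK t ⟨ht.1.le, ht.2⟩
    have hxU : q t ∈ S.U := hKU hxK
    have h0Sig : q 0 ∈ Sig := by rw [hSigdef]; exact hV0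
    have hv0 : δ ≤ ‖S.grad (q 0)‖ := hδlow _ h0Sig
    have htle1 : t ≤ 1 := le_trans htT.le hT1
    have htt : t * t ≤ T :=
      le_trans (mul_le_of_le_one_right ht0.le htle1) htT.le
    have ha_err : ‖S.grad (q t) - S.grad (q 0)‖ ≤ Db * M * (t * t) := by
      have h := hgd t htmem
      have h2 : Db * (M * t) * t = Db * M * (t * t) := by ring
      linarith only [h2 ▸ h]
    have haerrT : Db * M * (t * t) ≤ δ / 2 := by
      have h1 : Db * M * (t * t) ≤ Db * M * T :=
        mul_le_mul_of_nonneg_left htt (mul_nonneg hDb0 hM0.le)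
      have h2 : Db * M * T ≤ (Db * M + c₂ + 1) * T :=
        mul_le_mul_of_nonneg_right (by linarith only [hc₂0]) hT0.le
      linarith only [h1, h2, hTδ]
    have hanorm : δ / 2 ≤ ‖S.grad (q t)‖ := by
      have h2 : ‖S.grad (q 0)‖ - ‖S.grad (q t)‖ ≤ ‖S.grad (q t) - S.grad (q 0)‖ := by
        rw [norm_sub_rev]; exact norm_sub_norm_le _ _
      linarith only [h2, ha_err, haerrT, hv0]
    have ha0 : S.grad (q t) ≠ 0 := by
      intro h; rw [h, norm_zero] at hanorm; linarith only [hanorm, hδ]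
    have hb_err : ‖q' t + t • S.grad (q 0)‖ ≤ c₂ * (t * t) * t := hwest t htmem
    have hc₂T : c₂ * (t * t) ≤ δ / 2 := by
      have h1 : c₂ * (t * t) ≤ c₂ * T := mul_le_mul_of_nonneg_left htt hc₂0
      have h2 : c₂ * T ≤ (Db * M + c₂ + 1) * T :=
        mul_le_mul_of_nonneg_right
          (by linarith only [mul_nonneg hDb0 hM0.le]) hT0.le
      linarith only [h1, h2, hTδ]
    have hbnorm : (δ / 2) * t ≤ ‖q' t‖ := by
      have h1 : ‖t • S.grad (q 0)‖ = t * ‖S.grad (q 0)‖ := by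
        rw [norm_smul, Real.norm_of_nonneg ht0.le]
      have h4 : ‖t • S.grad (q 0)‖ = ‖(q' t + t • S.grad (q 0)) - q' t‖ := by
        rw [add_sub_cancel_left]
      have h5 := norm_sub_le (q' t + t • S.grad (q 0)) (q' t)
      have h6 : c₂ * (t * t) * t ≤ (δ / 2) * t :=
        mul_le_mul_of_nonneg_right hc₂T ht0.le
      have h7 : t * δ ≤ t * ‖S.grad (q 0)‖ := mul_le_mul_of_nonneg_left hv0 ht0.le
      have h8 := h4 ▸ h5
      linarith only [hb_err, h1, h8, h7, h6]
    have hb0 : q' t ≠ 0 := by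
      intro h; rw [h, norm_zero] at hbnorm
      have := mul_pos (half_pos hδ) ht0
      linarith only [hbnorm, this]
    have hgnb : 0 < S.gnorm (q t) (q' t) := S.gnorm_pos hxU hb0
    have hkey : (S.gnorm (q t) (q' t))⁻¹ • q' t
        = -((S.gnorm (q t) ((-t⁻¹) • q' t))⁻¹ • ((-t⁻¹) • q' t)) := by
      have hg1 : S.gnorm (q t) ((-t⁻¹) • q' t) = t⁻¹ * S.gnorm (q t) (q' t) := by
        rw [S.gnorm_smul, abs_neg, abs_inv, abs_of_pos ht0]
      rw [hg1]
      funext k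
      simp only [Pi.neg_apply, Pi.smul_apply, smul_eq_mul, mul_inv, inv_inv]
      field_simp
    have hu0 : ((-t⁻¹) • q' t : Vec N) ≠ 0 :=
      smul_ne_zero (neg_ne_zero.2 (inv_ne_zero ht0.ne')) hb0
    have hFeq : (S.gnorm (q t) (S.grad (q t)))⁻¹ • S.grad (q t)
          + (S.gnorm (q t) (q' t))⁻¹ • q' t
        = (S.gnorm (q t) (S.grad (q t)))⁻¹ • S.grad (q t)
          - (S.gnorm (q t) ((-t⁻¹) • q' t))⁻¹ • ((-t⁻¹) • q' t) := by
      rw [hkey, ← sub_eq_add_neg]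
    rw [hFeq]
    have hmain := S.gnorm_normalized_sub hxU ha0 hu0
    refine le_trans hmain ?_
    have hau : ‖S.grad (q t) - (-t⁻¹) • q' t‖ ≤ c₃ * (t * t) := by
      have hsplit : S.grad (q t) - (-t⁻¹) • q' t
          = (S.grad (q t) - S.grad (q 0)) + (t⁻¹ • (q' t + t • S.grad (q 0))) := by
        funext k
        simp only [Pi.sub_apply, Pi.add_apply, Pi.smul_apply, Pi.neg_apply, smul_eq_mul]
        field_simp
        ring
      rw [hsplit]
      have h2 : ‖t⁻¹ • (q' t + t • S.grad (q 0))‖ ≤ c₂ * (t * t) := by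
        rw [norm_smul, Real.norm_of_nonneg (inv_nonneg.2 ht0.le)]
        calc t⁻¹ * ‖q' t + t • S.grad (q 0)‖ ≤ t⁻¹ * (c₂ * (t * t) * t) :=
              mul_le_mul_of_nonneg_left hb_err (by positivity)
          _ = c₂ * (t * t) := by field_simp
      calc ‖(S.grad (q t) - S.grad (q 0)) + (t⁻¹ • (q' t + t • S.grad (q 0)))‖
          ≤ ‖S.grad (q t) - S.grad (q 0)‖ + ‖t⁻¹ • (q' t + t • S.grad (q 0))‖ :=
            norm_add_le _ _
        _ ≤ Db * M * (t * t) + c₂ * (t * t) := add_le_add ha_err h2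
        _ = c₃ * (t * t) := by rw [hc₃def]; ring
    have hga : sql * (δ / 2) ≤ S.gnorm (q t) (S.grad (q t)) :=
      le_trans (mul_le_mul_of_nonneg_left hanorm hsql.le) (hlower _ hxK _)
    have hgau : S.gnorm (q t) (S.grad (q t) - (-t⁻¹) • q' t) ≤ CU * (c₃ * (t * t)) :=
      le_trans (hupper _ hxK _) (mul_le_mul_of_nonneg_left hau hCU0)
    have hfincalc : 2 * S.gnorm (q t) (S.grad (q t) - (-t⁻¹) • q' t)
          / S.gnorm (q t) (S.grad (q t))
        ≤ (4 * CU * c₃ / (sql * δ)) * (t * t) := by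
      have hd1 : (0:ℝ) < sql * (δ / 2) := mul_pos hsql (half_pos hδ)
      have h1 : 2 * S.gnorm (q t) (S.grad (q t) - (-t⁻¹) • q' t)
            / S.gnorm (q t) (S.grad (q t))
          ≤ 2 * (CU * (c₃ * (t * t))) / (sql * (δ / 2)) := by
        apply div_le_div₀
        · have h0 := mul_nonneg hCU0 (mul_nonneg hc₃0 (mul_self_nonneg t))
          linarith only [h0]
        · linarith only [hgau]
        · exact hd1
        · exact hga
      refine le_trans h1 (le_of_eq ?_)
      field_simp
      ring
    refine le_trans hfincalc ?_
    have hle2 : (4 * CU * c₃ / (sql * δ)) * (t * t)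
        ≤ (4 * CU * c₃ / (sql * δ)) * t := by
      apply mul_le_mul_of_nonneg_left (mul_le_of_le_one_right ht0.le htle1)
        (div_nonneg (mul_nonneg (mul_nonneg (by norm_num) hCU0) hc₃0)
          (mul_nonneg hsql.le hδ.le))
    refine le_trans hle2 ?_
    exact mul_le_mul_of_nonneg_right (hCbdef ▸ le_max_right _ _) ht0.le

end
end JacobiPaper
end

section
/- Let x : [a,b] → V⁻¹((−∞,E)) be a nonconstant C² solution of (E−V(x)) D/ds ẋ − g(∇V(x),ẋ) ẋ + ½ g(ẋ,ẋ) ∇V(x) = 0, and let c_x > 0 be the constant with ½(E−V(x)) g(ẋ,ẋ) ≡ c_x. Define t(s) = ∫_a^s √(c_x)/(E−V(x(τ))) dτ, let σ(t) denote the inverse of t(s), and set q(t) = x(σ(t)). Then q satisfies D/dt q̇ + ∇V(q) = 0 and ½ g(q̇,q̇) + V(q) = E. -/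
open MeasureTheory Set Matrix Filter Topology

namespace JacobiPaper

noncomputable section

variable {N : ℕ}

section AuxLemmas


-- FTC aux
lemma hasDerivWithinAt_primitive' {φ : ℝ → ℝ} {a b s₀ : ℝ} (hab : a < b)
    (hc : ContinuousOn φ (Icc a b)) (hs₀ : s₀ ∈ Icc a b) :
    HasDerivWithinAt (fun u => ∫ τ in a..u, φ τ) (φ s₀) (Icc a b) s₀ := by
  have hint : IntervalIntegrable φ volume a s₀ :=
    (hc.mono (uIcc_subset_Icc ⟨le_rfl, hab.le⟩ hs₀)).intervalIntegrable
  have hright : s₀ < b → HasDerivWithinAt (fun u => ∫ τ in a..u, φ τ) (φ s₀) (Ici s₀) s₀ := by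
    intro hlt
    have hmem : Icc a b ∈ 𝓝[≥] s₀ := Icc_mem_nhdsGE_of_mem ⟨hs₀.1, hlt⟩
    have hmem' : Icc a b ∈ 𝓝[>] s₀ := nhdsWithin_mono s₀ Ioi_subset_Ici_self hmem
    exact intervalIntegral.integral_hasDerivWithinAt_right hint
      ⟨Icc a b, hmem', (hc.aestronglyMeasurable measurableSet_Icc)⟩
      ((hc s₀ hs₀).mono_of_mem_nhdsWithin hmem')
  have hleft : a < s₀ → HasDerivWithinAt (fun u => ∫ τ in a..u, φ τ) (φ s₀) (Iic s₀) s₀ := by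
    intro hlt
    have hmem : Icc a b ∈ 𝓝[≤] s₀ := Icc_mem_nhdsLE_of_mem ⟨hlt, hs₀.2⟩
    exact intervalIntegral.integral_hasDerivWithinAt_right hint
      ⟨Icc a b, hmem, (hc.aestronglyMeasurable measurableSet_Icc)⟩
      ((hc s₀ hs₀).mono_of_mem_nhdsWithin hmem)
  rcases eq_or_lt_of_le hs₀.1 with h1 | h1
  · exact (hright (h1 ▸ hab)).mono (by rw [← h1]; exact Icc_subset_Ici_self)
  · rcases eq_or_lt_of_le hs₀.2 with h2 | h2
    · exact (hleft h1).mono (by rw [h2]; exact Icc_subset_Iic_self)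
    · exact ((hleft h1).union (hright h2)).mono (fun u _ => (le_total u s₀).elim Or.inl Or.inr)

-- inverse continuity
lemma inv_continuousOn' {T σ : ℝ → ℝ} {a b : ℝ} (hab : a ≤ b)
    (hTc : ContinuousOn T (Icc a b)) (hTm : StrictMonoOn T (Icc a b))
    (hσ : ∀ s ∈ Icc a b, σ (T s) = s) :
    ContinuousOn σ (Icc (T a) (T b)) := by
  have hsurj : ∀ t ∈ Icc (T a) (T b), ∃ s ∈ Icc a b, T s = t := by
    intro t ht
    rcases intermediate_value_Icc hab hTc ht with ⟨s, hs, hst⟩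
    exact ⟨s, hs, hst⟩
  have hσmono : StrictMonoOn σ (Icc (T a) (T b)) := by
    intro t1 h1 t2 h2 hlt
    obtain ⟨s1, hs1, e1⟩ := hsurj t1 h1
    obtain ⟨s2, hs2, e2⟩ := hsurj t2 h2
    rw [← e1, ← e2, hσ s1 hs1, hσ s2 hs2]
    by_contra hcon
    push_neg at hcon
    have := hTm.monotoneOn hs2 hs1 hcon
    rw [e1, e2] at this
    exact absurd this (not_le.2 hlt)
  intro t₀ ht₀
  obtain ⟨s₀, hs₀, hTs₀⟩ := hsurj t₀ ht₀
  have hσt₀ : σ t₀ = s₀ := by rw [← hTs₀, hσ s₀ hs₀]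
  have hright : t₀ < T b → ContinuousWithinAt σ (Ici t₀) t₀ := by
    intro hlt
    have hs₀b : s₀ < b := by
      rcases eq_or_lt_of_le hs₀.2 with h | h
      · rw [h] at hTs₀
        exact absurd hTs₀ (ne_of_gt hlt)
      · exact h
    refine hσmono.continuousWithinAt_right_of_exists_between
      (Icc_mem_nhdsGE_of_mem ⟨ht₀.1, hlt⟩) ?_
    intro b' hb'
    rw [hσt₀] at hb'
    have hs₀s' : s₀ < min b b' := lt_min hs₀b hb'
    have hs'mem : min b b' ∈ Icc a b := ⟨hs₀.1.trans hs₀s'.le, min_le_left _ _⟩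
    refine ⟨T (min b b'), ⟨hTm.monotoneOn ⟨le_rfl, hab⟩ hs'mem hs'mem.1,
      hTm.monotoneOn hs'mem ⟨hab, le_rfl⟩ hs'mem.2⟩, ?_⟩
    rw [hσ _ hs'mem, hσt₀]
    exact ⟨hs₀s', min_le_right _ _⟩
  have hleft : T a < t₀ → ContinuousWithinAt σ (Iic t₀) t₀ := by
    intro hlt
    have has₀ : a < s₀ := by
      rcases eq_or_lt_of_le hs₀.1 with h | h
      · rw [← h] at hTs₀
        exact absurd hTs₀ (ne_of_lt hlt)
      · exact h
    refine hσmono.continuousWithinAt_left_of_exists_between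
      (Icc_mem_nhdsLE_of_mem ⟨hlt, ht₀.2⟩) ?_
    intro b' hb'
    rw [hσt₀] at hb'
    have hs₀s' : max a b' < s₀ := max_lt has₀ hb'
    have hs'mem : max a b' ∈ Icc a b := ⟨le_max_left _ _, hs₀s'.le.trans hs₀.2⟩
    refine ⟨T (max a b'), ⟨hTm.monotoneOn ⟨le_rfl, hab⟩ hs'mem hs'mem.1,
      hTm.monotoneOn hs'mem ⟨hab, le_rfl⟩ hs'mem.2⟩, ?_⟩
    rw [hσ _ hs'mem, hσt₀]
    exact ⟨le_max_right _ _, hs₀s'⟩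
  rcases eq_or_lt_of_le (hTm.monotoneOn ⟨le_rfl, hab⟩ ⟨hab, le_rfl⟩ hab : T a ≤ T b) with hd | hd
  · have hsing : Icc (T a) (T b) = {T a} := by rw [← hd, Icc_self]
    rw [hsing] at ht₀ ⊢
    rw [mem_singleton_iff] at ht₀
    rw [ht₀]
    exact continuousWithinAt_singleton
  · rcases eq_or_lt_of_le ht₀.1 with h1 | h1
    · exact (hright (h1 ▸ hd)).mono (fun u hu => h1 ▸ hu.1)
    · rcases eq_or_lt_of_le ht₀.2 with h2 | h2
      · exact (hleft h1).mono (fun u hu => h2 ▸ hu.2)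
      · exact ((hleft h1).union (hright h2)).mono
          (fun u _ => (le_total u t₀).elim Or.inl Or.inr)

-- inverse derivative
lemma inv_hasDerivWithinAt' {T σ : ℝ → ℝ} {a b m s₀ : ℝ} (hab : a ≤ b)
    (hTc : ContinuousOn T (Icc a b)) (hTm : StrictMonoOn T (Icc a b))
    (hσ : ∀ s ∈ Icc a b, σ (T s) = s) (hs₀ : s₀ ∈ Icc a b)
    (hT : HasDerivWithinAt T m (Icc a b) s₀) (hm : m ≠ 0) :
    HasDerivWithinAt σ m⁻¹ (Icc (T a) (T b)) (T s₀) := by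
  have hσc := inv_continuousOn' hab hTc hTm hσ
  have hsurj : ∀ t ∈ Icc (T a) (T b), ∃ s ∈ Icc a b, T s = t := by
    intro t ht
    rcases intermediate_value_Icc hab hTc ht with ⟨s, hs, hst⟩
    exact ⟨s, hs, hst⟩
  have hmemT : T s₀ ∈ Icc (T a) (T b) :=
    ⟨hTm.monotoneOn ⟨le_rfl, hab⟩ hs₀ hs₀.1, hTm.monotoneOn hs₀ ⟨hab, le_rfl⟩ hs₀.2⟩
  have hσt₀ : σ (T s₀) = s₀ := hσ s₀ hs₀
  rw [hasDerivWithinAt_iff_tendsto_slope]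
  have hTslope : Tendsto (slope T s₀) (𝓝[Icc a b \ {s₀}] s₀) (𝓝 m) :=
    hasDerivWithinAt_iff_tendsto_slope.1 hT
  have hmaps : MapsTo σ (Icc (T a) (T b) \ {T s₀}) (Icc a b \ {s₀}) := by
    rintro t ⟨ht, hne⟩
    obtain ⟨s, hs, rfl⟩ := hsurj t ht
    rw [hσ s hs]
    exact ⟨hs, fun h => hne (by rw [mem_singleton_iff, h])⟩
  have hσtend : Tendsto σ (𝓝[Icc (T a) (T b) \ {T s₀}] (T s₀)) (𝓝[Icc a b \ {s₀}] s₀) := by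
    rw [tendsto_nhdsWithin_iff]
    constructor
    · have h1 : Tendsto σ (𝓝[Icc (T a) (T b)] (T s₀)) (𝓝 s₀) := by
        have := (hσc (T s₀) hmemT).tendsto
        rwa [hσt₀] at this
      exact h1.mono_left (nhdsWithin_mono _ diff_subset)
    · exact eventually_nhdsWithin_of_forall (fun t ht => hmaps ht)
  have h1 : Tendsto (fun t => (slope T s₀ (σ t))⁻¹)
      (𝓝[Icc (T a) (T b) \ {T s₀}] (T s₀)) (𝓝 m⁻¹) :=
    (hTslope.comp hσtend).inv₀ hm
  refine Filter.Tendsto.congr' (eventually_nhdsWithin_of_forall ?_) h1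
  rintro t ⟨ht, hne⟩
  obtain ⟨s, hs, rfl⟩ := hsurj t ht
  have hσs : σ (T s) = s := hσ s hs
  rw [slope_def_field, slope_def_field, hσs, hσt₀, inv_div]


variable {N : ℕ}

lemma gP_smul_smul (g : Vec N → Matrix (Fin N) (Fin N) ℝ) (y v w : Vec N) (c d : ℝ) :
    gP g y (c • v) (d • w) = (c * d) * gP g y v w := by
  simp only [gP, Finset.mul_sum]
  refine Finset.sum_congr rfl fun i _ => ?_
  refine Finset.sum_congr rfl fun j _ => ?_
  simp only [Pi.smul_apply, smul_eq_mul]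
  ring

lemma gP_eq_dot (g : Vec N → Matrix (Fin N) (Fin N) ℝ) (y v w : Vec N) :
    gP g y v w = v ⬝ᵥ (g y *ᵥ w) := by
  simp only [gP, dotProduct, Matrix.mulVec, Finset.mul_sum]
  refine Finset.sum_congr rfl fun i _ => ?_
  refine Finset.sum_congr rfl fun j _ => ?_
  ring

lemma Setting.det_ne_zero (S : Setting N) {y : Vec N} (hy : y ∈ S.U) : (S.g y).det ≠ 0 := by
  intro h0
  obtain ⟨v, hv, hmv⟩ := (Matrix.exists_mulVec_eq_zero_iff).2 h0
  have hpos := S.hgpos y hy v hv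
  rw [gP_eq_dot, hmv, dotProduct_zero] at hpos
  exact lt_irrefl 0 hpos

lemma Setting.prod_grad_eq (S : Setting N) {y : Vec N} (hy : y ∈ S.U) (v : Vec N) :
    S.prod y (S.grad y) v = fderiv ℝ S.V y v := by
  have hdet := S.det_ne_zero hy
  have hinv : S.g y * (S.g y)⁻¹ = 1 := Matrix.mul_nonsing_inv _ (isUnit_iff_ne_zero.2 hdet)
  have key : ∀ j, ∑ i, S.g y i j * S.grad y i = euclGrad S.V y j := by
    intro j
    have h1 : ∑ i, S.g y i j * S.grad y i = (S.g y *ᵥ S.grad y) j := by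
      simp only [Matrix.mulVec, dotProduct]
      exact Finset.sum_congr rfl fun i _ => by rw [S.hgsymm y hy i j]
    rw [h1]
    have h2 : S.g y *ᵥ S.grad y = (S.g y * (S.g y)⁻¹) *ᵥ euclGrad S.V y := by
      rw [← Matrix.mulVec_mulVec]
      rfl
    rw [h2, hinv, Matrix.one_mulVec]
  calc S.prod y (S.grad y) v = ∑ j, (∑ i, S.g y i j * S.grad y i) * v j := by
        simp only [Setting.prod, gP]
        rw [Finset.sum_comm]
        exact Finset.sum_congr rfl fun j _ => by rw [Finset.sum_mul]
    _ = ∑ j, euclGrad S.V y j * v j := Finset.sum_congr rfl fun j _ => by rw [key j]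
    _ = fderiv ℝ S.V y v := by
        conv_rhs => rw [← Finset.univ_sum_single v, map_sum]
        refine Finset.sum_congr rfl fun j _ => ?_
        have h3 : (Pi.single j (v j) : Vec N) = (v j) • (Pi.single j (1:ℝ) : Vec N) := by
          rw [← Pi.single_smul, smul_eq_mul, mul_one]
        rw [h3, _root_.map_smul, smul_eq_mul, euclGrad]
        ring

end AuxLemmas

/-- **Lemma 2.3**: reparameterizing a Jacobi-metric geodesic by the Maupertuis time
change yields a solution of Newton's equation with total energy `E`. -/
theorem reparam_newton {N : ℕ} (S : Setting N) (a b : ℝ) (hab : a < b)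
    (x x' x'' : ℝ → Vec N)
    (hC2 : C2OnWith x x' x'' (Icc a b))
    (hin : ∀ s ∈ Icc a b, S.V (x s) < S.E)
    (hnc : ∃ s ∈ Icc a b, ∃ t ∈ Icc a b, x s ≠ x t)
    (hgeo : ∀ s ∈ Icc a b, S.GeoEqAt x x' x'' s)
    (cx : ℝ) (hcx : 0 < cx)
    (hcons : ∀ s ∈ Icc a b,
      (1/2) * (S.E - S.V (x s)) * S.prod (x s) (x' s) (x' s) = cx)
    (σ : ℝ → ℝ)
    (hσ : ∀ s ∈ Icc a b,
      σ (∫ τ in a..s, Real.sqrt cx / (S.E - S.V (x τ))) = s) :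
    ∃ q' q'' : ℝ → Vec N,
      C2OnWith (x ∘ σ) q' q'' (Icc 0 (∫ τ in a..b, Real.sqrt cx / (S.E - S.V (x τ)))) ∧
      ∀ t ∈ Icc 0 (∫ τ in a..b, Real.sqrt cx / (S.E - S.V (x τ))),
        (∀ k, S.covD (x ∘ σ) q' q' q'' t k + S.grad (x (σ t)) k = 0) ∧
        (1/2) * S.prod (x (σ t)) (q' t) (q' t) + S.V (x (σ t)) = S.E := by
  classical
  obtain ⟨hx1, hx2, hx3⟩ := hC2
  have hr : (0:ℝ) < Real.sqrt cx := Real.sqrt_pos.2 hcx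
  have hrr : Real.sqrt cx * Real.sqrt cx = cx := Real.mul_self_sqrt hcx.le
  set Tf : ℝ → ℝ := fun s => ∫ τ in a..s, Real.sqrt cx / (S.E - S.V (x τ)) with hTf_def
  rw [show (∫ τ in a..b, Real.sqrt cx / (S.E - S.V (x τ))) = Tf b from rfl]
  have hxU : ∀ s ∈ Icc a b, x s ∈ S.U := fun s hs => S.hsub (le_of_lt (hin s hs))
  have hxc : ContinuousOn x (Icc a b) := fun s hs => (hx1 s hs).continuousWithinAt
  have hmapsU : MapsTo x (Icc a b) S.U := fun s hs => hxU s hs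
  have hVxc : ContinuousOn (fun s => S.V (x s)) (Icc a b) := S.hVC.continuousOn.comp hxc hmapsU
  have hEV : ∀ s ∈ Icc a b, 0 < S.E - S.V (x s) := fun s hs => sub_pos.2 (hin s hs)
  have hφc : ContinuousOn (fun s => Real.sqrt cx / (S.E - S.V (x s))) (Icc a b) :=
    continuousOn_const.div (continuousOn_const.sub hVxc) (fun s hs => (hEV s hs).ne')
  have hφpos : ∀ s ∈ Icc a b, 0 < Real.sqrt cx / (S.E - S.V (x s)) :=
    fun s hs => div_pos hr (hEV s hs)
  have hint : ∀ c d, c ∈ Icc a b → d ∈ Icc a b →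
      IntervalIntegrable (fun s => Real.sqrt cx / (S.E - S.V (x s))) volume c d :=
    fun c d hcm hdm => (hφc.mono (uIcc_subset_Icc hcm hdm)).intervalIntegrable
  have hTd : ∀ s ∈ Icc a b, HasDerivWithinAt Tf (Real.sqrt cx / (S.E - S.V (x s))) (Icc a b) s :=
    fun s hs => hasDerivWithinAt_primitive' hab hφc hs
  have hTc : ContinuousOn Tf (Icc a b) := fun s hs => (hTd s hs).continuousWithinAt
  have hTm : StrictMonoOn Tf (Icc a b) := by
    intro s1 h1 s2 h2 hlt
    have hpos := intervalIntegral.intervalIntegral_pos_of_pos_on (hint s1 s2 h1 h2)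
      (fun u hu => hφpos u ⟨h1.1.trans hu.1.le, hu.2.le.trans h2.2⟩) hlt
    have hsub : Tf s2 - Tf s1 = ∫ τ in s1..s2, Real.sqrt cx / (S.E - S.V (x τ)) :=
      intervalIntegral.integral_interval_sub_left (hint a s2 ⟨le_rfl, hab.le⟩ h2)
        (hint a s1 ⟨le_rfl, hab.le⟩ h1)
    linarith
  have hTa : Tf a = 0 := intervalIntegral.integral_same
  have hIccEq : Icc (Tf a) (Tf b) = Icc 0 (Tf b) := by rw [hTa]
  have hσT : ∀ s ∈ Icc a b, σ (Tf s) = s := hσ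
  have hσc : ContinuousOn σ (Icc 0 (Tf b)) := hIccEq ▸ inv_continuousOn' hab.le hTc hTm hσT
  have hsurj : ∀ t ∈ Icc 0 (Tf b), ∃ s ∈ Icc a b, Tf s = t := by
    intro t ht
    rcases intermediate_value_Icc hab.le hTc (hIccEq ▸ ht) with ⟨s, hs, hst⟩
    exact ⟨s, hs, hst⟩
  have hσmem : MapsTo σ (Icc 0 (Tf b)) (Icc a b) := by
    intro t ht
    obtain ⟨s, hs, rfl⟩ := hsurj t ht
    rw [hσT s hs]; exact hs
  set p : ℝ → ℝ := fun s => fderiv ℝ S.V (x s) (x' s) with hp_def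
  set f : ℝ → ℝ := fun s => (S.E - S.V (x s)) / Real.sqrt cx with hf_def
  set f1 : ℝ → ℝ := fun s => -p s / Real.sqrt cx with hf1_def
  have hσd : ∀ t ∈ Icc 0 (Tf b), HasDerivWithinAt σ (f (σ t)) (Icc 0 (Tf b)) t := by
    intro t ht
    obtain ⟨s, hs, rfl⟩ := hsurj t ht
    have h0 := inv_hasDerivWithinAt' hab.le hTc hTm hσT hs (hTd s hs) (hφpos s hs).ne'
    rw [hIccEq] at h0
    rw [hσT s hs]
    simpa [hf_def, inv_div] using h0
  have hVd : ∀ s ∈ Icc a b, HasDerivWithinAt (fun u => S.V (x u)) (p s) (Icc a b) s := by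
    intro s hs
    have hdiff : DifferentiableAt ℝ S.V (x s) :=
      (S.hVC.differentiableOn (by norm_num)).differentiableAt (S.hU.mem_nhds (hxU s hs))
    exact hdiff.hasFDerivAt.comp_hasDerivWithinAt s (hx1 s hs)
  have hfd : ∀ s ∈ Icc a b, HasDerivWithinAt f (f1 s) (Icc a b) s := by
    intro s hs
    have h0 := ((hVd s hs).const_sub S.E).div_const (Real.sqrt cx)
    simpa [hf_def, hf1_def, neg_div] using h0
  refine ⟨fun t => f (σ t) • x' (σ t),
    fun t => (f1 (σ t) * f (σ t)) • x' (σ t) + (f (σ t) * f (σ t)) • x'' (σ t),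
    ⟨?_, ?_, ?_⟩, ?_⟩
  · intro t ht
    exact (hx1 (σ t) (hσmem ht)).scomp t (hσd t ht) hσmem
  · intro t ht
    have h1 : HasDerivWithinAt (fun u => f (σ u)) (f (σ t) • f1 (σ t)) (Icc 0 (Tf b)) t :=
      (hfd (σ t) (hσmem ht)).scomp t (hσd t ht) hσmem
    have h2 : HasDerivWithinAt (fun u => x' (σ u)) (f (σ t) • x'' (σ t)) (Icc 0 (Tf b)) t :=
      (hx2 (σ t) (hσmem ht)).scomp t (hσd t ht) hσmem
    have h3 : HasDerivWithinAt (fun u => f (σ u) • x' (σ u)) _ (Icc 0 (Tf b)) t := h1.smul h2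
    convert h3 using 1
    ext k
    simp only [Pi.add_apply, Pi.smul_apply, smul_eq_mul]
    ring
  · have hx'c : ContinuousOn x' (Icc a b) := fun s hs => (hx2 s hs).continuousWithinAt
    have hfC : ContinuousOn (fderiv ℝ S.V) S.U :=
      S.hVC.continuousOn_fderiv_of_isOpen S.hU (by norm_num)
    have hpc : ContinuousOn p (Icc a b) := (hfC.comp hxc hmapsU).clm_apply hx'c
    have hfc : ContinuousOn f (Icc a b) := (continuousOn_const.sub hVxc).div_const _
    have hf1c : ContinuousOn f1 (Icc a b) := hpc.neg.div_const _
    exact (((hf1c.comp hσc hσmem).mul (hfc.comp hσc hσmem)).smul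
      (hx'c.comp hσc hσmem)).add
      (((hfc.comp hσc hσmem).mul (hfc.comp hσc hσmem)).smul (hx3.comp hσc hσmem))
  · intro t ht
    have hs : σ t ∈ Icc a b := hσmem ht
    have hEVs := hEV (σ t) hs
    have hcs := hcons (σ t) hs
    constructor
    · intro k
      have hg := hgeo (σ t) hs k
      rw [S.prod_grad_eq (hxU (σ t) hs)] at hg
      simp only [Setting.covD] at hg ⊢
      have hsum : ∑ i, ∑ j, S.christoffel ((x ∘ σ) t) k i j
            * ((fun t => f (σ t) • x' (σ t)) t) i * ((fun t => f (σ t) • x' (σ t)) t) j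
          = (f (σ t) * f (σ t))
            * ∑ i, ∑ j, S.christoffel (x (σ t)) k i j * x' (σ t) i * x' (σ t) j := by
        rw [Function.comp_apply, Finset.mul_sum]
        refine Finset.sum_congr rfl fun i _ => ?_
        rw [Finset.mul_sum]
        refine Finset.sum_congr rfl fun j _ => ?_
        simp only [Pi.smul_apply, smul_eq_mul]
        ring
      rw [hsum]
      simp only [Pi.add_apply, Pi.smul_apply, smul_eq_mul, Function.comp_apply]
      simp only [hf_def, hf1_def, hp_def] at hg ⊢
      have hfne : Real.sqrt cx ≠ 0 := hr.ne'
      field_simp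
      rw [Real.sq_sqrt hcx.le]
      linear_combination ((S.E - S.V (x (σ t)))) * hg
        - (S.grad (x (σ t)) k) * hcs
    · have hps : S.prod (x (σ t)) (f (σ t) • x' (σ t)) (f (σ t) • x' (σ t))
          = (f (σ t) * f (σ t)) * S.prod (x (σ t)) (x' (σ t)) (x' (σ t)) :=
        gP_smul_smul S.g (x (σ t)) (x' (σ t)) (x' (σ t)) (f (σ t)) (f (σ t))
      show (1/2) * S.prod (x (σ t)) (f (σ t) • x' (σ t)) (f (σ t) • x' (σ t)) + S.V (x (σ t)) = S.E
      rw [hps]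
      simp only [hf_def]
      have hfne : Real.sqrt cx ≠ 0 := hr.ne'
      field_simp
      rw [Real.sq_sqrt hcx.le]
      linear_combination (2 * (S.E - S.V (x (σ t)))) * hcs


end
end JacobiPaper
end

section
/- The map d_V : Ω_E → [0,+∞) is continuous, and it admits a continuous extension to the closure of Ω_E obtained by setting d_V = 0 on the boundary V⁻¹(E). -/
open MeasureTheory Set Matrix Filter Topology

namespace JacobiPaper

noncomputable section

variable {N : ℕ}

section Aux

open scoped Interval

private lemma deriv_comp_two (f : ℝ → Vec N) (s : ℝ) :
    deriv (fun t => f (2 * t)) s = (2:ℝ) • deriv f (2 * s) := by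
  by_cases h : DifferentiableAt ℝ f (2 * s)
  · have h2 : HasDerivAt (fun t : ℝ => 2 * t) 2 s := by
      simpa using (hasDerivAt_id s).const_mul (2:ℝ)
    exact (HasDerivAt.scomp s h.hasDerivAt h2).deriv
  · have hz : ¬ DifferentiableAt ℝ (fun t => f (2 * t)) s := by
      intro hd
      have h3 : DifferentiableAt ℝ (fun u : ℝ => u / 2) (2 * s) :=
        differentiableAt_id.div_const 2
      have hd' : DifferentiableAt ℝ (fun t => f (2 * t)) (2 * s / 2) := by
        rw [show (2 * s) / 2 = s by ring]; exact hd
      have h4 : DifferentiableAt ℝ ((fun t => f (2 * t)) ∘ fun u : ℝ => u / 2) (2 * s) :=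
        DifferentiableAt.comp (2 * s) hd' h3
      have he : ((fun t => f (2 * t)) ∘ fun u : ℝ => u / 2) = f := by
        funext u; show f (2 * (u / 2)) = f u; congr 1; ring
      rw [he] at h4
      exact h h4
    rw [deriv_zero_of_not_differentiableAt h, deriv_zero_of_not_differentiableAt hz, smul_zero]

private lemma hasDerivAt_affine (A w : Vec N) (s : ℝ) :
    HasDerivAt (fun t : ℝ => A + t • w) w s := by
  simpa using ((hasDerivAt_id s).smul_const w).const_add A

private lemma deriv_affine (A w : Vec N) :
    deriv (fun t : ℝ => A + t • w) = fun _ => w :=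
  funext fun s => (hasDerivAt_affine A w s).deriv

private lemma gP_smul (g : Vec N → Matrix (Fin N) (Fin N) ℝ) (p : Vec N) (c : ℝ) (v : Vec N) :
    gP g p (c • v) (c • v) = c ^ 2 * gP g p v v := by
  simp only [gP, Finset.mul_sum, Pi.smul_apply, smul_eq_mul]
  exact Finset.sum_congr rfl fun i _ => Finset.sum_congr rfl fun j _ => by ring

private lemma gP_nonneg (S : Setting N) {p : Vec N} (hp : p ∈ S.U) (v : Vec N) :
    0 ≤ S.prod p v v := by
  rcases eq_or_ne v 0 with rfl | hv
  · simp [Setting.prod, gP]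
  · exact (S.hgpos p hp v hv).le

private lemma LV_nonneg (S : Setting N) (x : ℝ → Vec N) : 0 ≤ S.LV x :=
  intervalIntegral.integral_nonneg (by norm_num) fun u _ => Real.sqrt_nonneg _

private lemma dV_nonneg (S : Setting N) (Q : Vec N) : 0 ≤ S.dV Q :=
  Real.sInf_nonneg fun r hr => by
    obtain ⟨x, -, rfl⟩ := hr; exact LV_nonneg S x

private lemma dV_bddBelow (S : Setting N) (Q : Vec N) :
    BddBelow {r | ∃ x, S.InXQ Q x ∧ r = S.LV x} :=
  ⟨0, fun r hr => by obtain ⟨x, -, rfl⟩ := hr; exact LV_nonneg S x⟩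

private lemma aesm_LV_integrand (S : Setting N) {x : ℝ → Vec N} {a b : ℝ}
    (hx : ContinuousOn x (Icc a b)) (hmem : ∀ s ∈ Icc a b, S.V (x s) ≤ S.E) :
    AEStronglyMeasurable
      (fun s => Real.sqrt (1/2 * (S.E - S.V (x s)) * S.prod (x s) (deriv x s) (deriv x s)))
      (volume.restrict (Icc a b)) := by
  have hmap : MapsTo x (Icc a b) S.U := fun s hs => S.hsub (hmem s hs)
  have hV : AEMeasurable (fun s => S.V (x s)) (volume.restrict (Icc a b)) :=
    ((S.hVC.continuousOn).comp hx hmap).aemeasurable measurableSet_Icc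
  have hg : ∀ i j, AEMeasurable (fun s => S.g (x s) i j) (volume.restrict (Icc a b)) :=
    fun i j => (((S.hgC i j).continuousOn).comp hx hmap).aemeasurable measurableSet_Icc
  have hd : ∀ i, AEMeasurable (fun s => deriv x s i) (volume.restrict (Icc a b)) :=
    fun i => ((measurable_pi_apply i).comp (measurable_deriv x)).aemeasurable
  have hprod : AEMeasurable (fun s => S.prod (x s) (deriv x s) (deriv x s))
      (volume.restrict (Icc a b)) := by
    have h1 : ∀ i j, AEMeasurable
        (fun s => S.g (x s) i j * deriv x s i * deriv x s j) (volume.restrict (Icc a b)) :=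
      fun i j => ((hg i j).mul (hd i)).mul (hd j)
    simp only [Setting.prod, gP]
    exact Finset.aemeasurable_fun_sum _ fun i _ => Finset.aemeasurable_fun_sum _ fun j _ => h1 i j
  have hF : AEMeasurable
      (fun s => 1/2 * (S.E - S.V (x s)) * S.prod (x s) (deriv x s) (deriv x s))
      (volume.restrict (Icc a b)) :=
    ((aemeasurable_const.sub hV).const_mul _).mul hprod
  exact (Real.continuous_sqrt.measurable.comp_aemeasurable hF).aestronglyMeasurable

private lemma sqrt_bound (S : Setting N) {CV Cg : ℝ} (hCV0 : 0 ≤ CV) (hCg0 : 0 ≤ Cg)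
    (hCV : ∀ p, S.V p ≤ S.E → S.E - S.V p ≤ CV)
    (hCg : ∀ p, S.V p ≤ S.E → ∀ v : Vec N, S.prod p v v ≤ Cg * ‖v‖ ^ 2)
    {p : Vec N} (hp : S.V p ≤ S.E) (v : Vec N) :
    Real.sqrt (1/2 * (S.E - S.V p) * S.prod p v v) ≤ Real.sqrt (1/2 * CV * Cg) * ‖v‖ := by
  have h0 : 0 ≤ S.prod p v v := gP_nonneg S (S.hsub hp) v
  have hEV : 0 ≤ S.E - S.V p := sub_nonneg.2 hp
  have h1 : 1/2 * (S.E - S.V p) * S.prod p v v ≤ 1/2 * CV * Cg * ‖v‖ ^ 2 := by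
    have h2 : (S.E - S.V p) * S.prod p v v ≤ CV * (Cg * ‖v‖ ^ 2) :=
      mul_le_mul (hCV p hp) (hCg p hp v) h0 hCV0
    nlinarith
  calc Real.sqrt (1/2 * (S.E - S.V p) * S.prod p v v)
      ≤ Real.sqrt (1/2 * CV * Cg * ‖v‖ ^ 2) := Real.sqrt_le_sqrt h1
    _ = Real.sqrt (1/2 * CV * Cg) * ‖v‖ := by
        rw [Real.sqrt_mul (by positivity) _, Real.sqrt_sq (norm_nonneg v)]

private lemma LV_integrand_integrableOn (S : Setting N) {x : ℝ → Vec N} {Cb : ℝ}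
    (hx : ContinuousOn x (Icc 0 1)) (hmem : ∀ s ∈ Icc (0:ℝ) 1, S.V (x s) ≤ S.E)
    (hd : IntegrableOn (deriv x) (Icc 0 1))
    (hbound : ∀ s ∈ Icc (0:ℝ) 1,
      Real.sqrt (1/2 * (S.E - S.V (x s)) * S.prod (x s) (deriv x s) (deriv x s))
        ≤ Cb * ‖deriv x s‖) :
    IntegrableOn
      (fun s => Real.sqrt (1/2 * (S.E - S.V (x s)) * S.prod (x s) (deriv x s) (deriv x s)))
      (Icc 0 1) := by
  refine Integrable.mono' (hd.norm.const_mul Cb) (aesm_LV_integrand S hx hmem) ?_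
  filter_upwards [self_mem_ae_restrict measurableSet_Icc] with s hs
  rw [Real.norm_eq_abs, abs_of_nonneg (Real.sqrt_nonneg _)]
  exact hbound s hs

private lemma H1On_affine (A w : Vec N) : H1On (fun s : ℝ => A + s • w) 0 1 := by
  have hc : Continuous fun s : ℝ => A + s • w :=
    continuous_const.add (continuous_id.smul continuous_const)
  refine ⟨hc.continuousOn, ?_, ?_, ?_⟩
  · simp only [deriv_affine]
    exact integrableOn_const measure_Icc_lt_top.ne
  · simp only [deriv_affine]
    exact integrableOn_const measure_Icc_lt_top.ne
  · intro t ht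
    simp only [deriv_affine]
    rw [intervalIntegral.integral_const]
    simp

private lemma LV_affine_le (S : Setting N) {CV Cg : ℝ} (hCV0 : 0 ≤ CV) (hCg0 : 0 ≤ Cg)
    (hCV : ∀ p, S.V p ≤ S.E → S.E - S.V p ≤ CV)
    (hCg : ∀ p, S.V p ≤ S.E → ∀ v : Vec N, S.prod p v v ≤ Cg * ‖v‖ ^ 2)
    {A w : Vec N} (hseg : ∀ s ∈ Icc (0:ℝ) 1, S.V (A + s • w) ≤ S.E) :
    S.LV (fun s => A + s • w) ≤ Real.sqrt (1/2 * CV * Cg) * ‖w‖ := by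
  have hmap : MapsTo (fun s : ℝ => A + s • w) (Icc 0 1) S.U := fun s hs => S.hsub (hseg s hs)
  have hγ : Continuous fun s : ℝ => A + s • w :=
    continuous_const.add (continuous_id.smul continuous_const)
  have hVγ : ContinuousOn (fun s : ℝ => S.V (A + s • w)) (Icc 0 1) :=
    (S.hVC.continuousOn).comp hγ.continuousOn hmap
  have hgγ : ContinuousOn (fun s : ℝ => S.prod (A + s • w) w w) (Icc 0 1) := by
    simp only [Setting.prod, gP]
    refine continuousOn_finset_sum _ fun i _ => continuousOn_finset_sum _ fun j _ => ?_
    exact ((((S.hgC i j).continuousOn).comp hγ.continuousOn hmap).mul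
      continuousOn_const).mul continuousOn_const
  have hfc : ContinuousOn
      (fun s : ℝ => Real.sqrt (1/2 * (S.E - S.V (A + s • w)) * S.prod (A + s • w) w w))
      (Icc 0 1) :=
    Real.continuous_sqrt.comp_continuousOn
      ((continuousOn_const.mul (continuousOn_const.sub hVγ)).mul hgγ)
  have hint : IntervalIntegrable
      (fun s : ℝ => Real.sqrt (1/2 * (S.E - S.V (A + s • w)) * S.prod (A + s • w) w w))
      volume 0 1 := (hfc.mono (by rw [uIcc_of_le (by norm_num : (0:ℝ) ≤ 1)])).intervalIntegrable
  unfold Setting.LV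
  simp only [deriv_affine]
  calc (∫ s in (0:ℝ)..1,
        Real.sqrt (1/2 * (S.E - S.V (A + s • w)) * S.prod (A + s • w) w w))
      ≤ ∫ _ in (0:ℝ)..1, Real.sqrt (1/2 * CV * Cg) * ‖w‖ := by
        refine intervalIntegral.integral_mono_on (by norm_num) hint
          intervalIntegrable_const fun s hs => ?_
        exact sqrt_bound S hCV0 hCg0 hCV hCg (hseg s hs) w
    _ = Real.sqrt (1/2 * CV * Cg) * ‖w‖ := by
        rw [intervalIntegral.integral_const]; simp

private lemma prod_smul (S : Setting N) (p : Vec N) (c : ℝ) (v : Vec N) :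
    S.prod p (c • v) (c • v) = c ^ 2 * S.prod p v v := gP_smul S.g p c v

private lemma ae_restrict_uIoc {a b : ℝ} {f g : ℝ → ℝ}
    (h : ∀ᵐ s : ℝ, s ∈ Ι a b → f s = g s) : f =ᵐ[volume.restrict (Ι a b)] g := by
  rw [Filter.EventuallyEq, ae_restrict_iff' measurableSet_uIoc]
  exact h

private lemma ae_restrict_uIoc' {a b : ℝ} {f g : ℝ → Vec N}
    (h : ∀ᵐ s : ℝ, s ∈ Ι a b → f s = g s) : f =ᵐ[volume.restrict (Ι a b)] g := by
  rw [Filter.EventuallyEq, ae_restrict_iff' measurableSet_uIoc]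
  exact h

private lemma ae_ne_half : ∀ᵐ s : ℝ, s ≠ (1/2 : ℝ) := by
  rw [ae_iff]
  have h : {s : ℝ | ¬ s ≠ (1/2:ℝ)} = {(1/2 : ℝ)} := by ext s; simp
  rw [h]; exact measure_singleton _

private lemma concat_step (S : Setting N) {CV Cg : ℝ} (hCV0 : 0 ≤ CV) (hCg0 : 0 ≤ Cg)
    (hCV : ∀ p, S.V p ≤ S.E → S.E - S.V p ≤ CV)
    (hCg : ∀ p, S.V p ≤ S.E → ∀ v : Vec N, S.prod p v v ≤ Cg * ‖v‖ ^ 2)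
    {Q Q' : Vec N} {x : ℝ → Vec N} (hx : S.InXQ Q x)
    (hseg : ∀ t ∈ Icc (0:ℝ) 1, S.V (Q + t • (Q' - Q)) < S.E) :
    ∃ z, S.InXQ Q' z ∧ S.LV z ≤ S.LV x + Real.sqrt (1/2 * CV * Cg) * ‖Q' - Q‖ := by
  obtain ⟨⟨hxc, hxi, hxsq, hxftc⟩, hx0, hxlt, hx1⟩ := hx
  set w : Vec N := Q' - Q with hwdef
  set y : ℝ → Vec N := fun t => Q + t • w with hydef
  set z : ℝ → Vec N := fun s => if s ≤ 1/2 then x (min (2*s) 1) else y (2*s - 1) with hzdef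
  set D : ℝ → Vec N := fun s => if s ≤ 1/2 then (2:ℝ) • deriv x (2*s) else (2:ℝ) • w
    with hDdef
  have hmemx : ∀ s ∈ Icc (0:ℝ) 1, S.V (x s) ≤ S.E := by
    intro s hs
    rcases eq_or_lt_of_le hs.1 with h0 | h0
    · rw [← h0, hx0]
    · exact (hxlt s ⟨h0, hs.2⟩).le
  have hz_left : ∀ s : ℝ, s ≤ 1/2 → z s = x (2*s) := by
    intro s hs
    simp only [hzdef]
    rw [if_pos hs, min_eq_left (by linarith : 2*s ≤ 1)]
  have hz_right : ∀ s : ℝ, ¬ (s ≤ 1/2) → z s = y (2*s - 1) := by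
    intro s hs; simp only [hzdef]; rw [if_neg hs]
  have hz0 : z 0 = x 0 := by rw [hz_left 0 (by norm_num)]; norm_num
  have hz1 : z 1 = Q' := by
    rw [hz_right 1 (by norm_num), hydef]
    simp only [hwdef]
    norm_num
  -- derivative of z off 1/2
  have hdz_lt : ∀ s : ℝ, s < 1/2 → deriv z s = (2:ℝ) • deriv x (2*s) := by
    intro s hs
    have hev : z =ᶠ[nhds s] fun t => x (2*t) := by
      filter_upwards [Iio_mem_nhds hs] with t ht
      exact hz_left t (le_of_lt ht)
    rw [hev.deriv_eq, deriv_comp_two]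
  have hdz_gt : ∀ s : ℝ, 1/2 < s → deriv z s = (2:ℝ) • w := by
    intro s hs
    have hev : z =ᶠ[nhds s] fun t => y (2*t - 1) := by
      filter_upwards [Ioi_mem_nhds hs] with t ht
      exact hz_right t (not_le.2 ht)
    rw [hev.deriv_eq]
    have hdone : HasDerivAt (fun t : ℝ => y (2*t - 1)) ((2:ℝ) • w) s := by
      have h1 : HasDerivAt (fun t : ℝ => 2*t - 1) 2 s := by
        simpa using ((hasDerivAt_id s).const_mul (2:ℝ)).sub_const 1
      simpa [hydef] using (h1.smul_const w).const_add Q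
    exact hdone.deriv
  have hDz : ∀ s : ℝ, s ≠ 1/2 → deriv z s = D s := by
    intro s hs
    rcases lt_or_gt_of_ne hs with hlt | hgt
    · rw [hdz_lt s hlt]; simp only [hDdef]; rw [if_pos hlt.le]
    · rw [hdz_gt s hgt]; simp only [hDdef]; rw [if_neg (not_le.2 hgt)]
  have hdz_ae : deriv z =ᵐ[volume] D := by
    filter_upwards [ae_ne_half] with s hs
    exact hDz s hs
  -- integrability of D and deriv z
  have hxi' : IntervalIntegrable (deriv x) volume 0 1 :=
    (intervalIntegrable_iff_integrableOn_Icc_of_le (by norm_num)).2 hxi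
  have hcompi : IntervalIntegrable (fun s => deriv x (2*s)) volume 0 (1/2) := by
    have h := hxi'.comp_mul_left (c := 2)
    norm_num at h
    exact h
  have hD1 : IntervalIntegrable D volume 0 (1/2) := by
    rw [intervalIntegrable_iff_integrableOn_Ioc_of_le (by norm_num)]
    refine (((hcompi.smul (2:ℝ)).def').mono_set
      (by rw [uIoc_of_le (by norm_num : (0:ℝ) ≤ 1/2)])).congr_fun ?_ measurableSet_Ioc
    intro s hs
    simp only [Pi.smul_apply, hDdef]
    rw [if_pos hs.2]
  have hD2 : IntervalIntegrable D volume (1/2) 1 := by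
    rw [intervalIntegrable_iff_integrableOn_Ioc_of_le (by norm_num)]
    refine (integrableOn_const measure_Ioc_lt_top.ne :
      IntegrableOn (fun _ => (2:ℝ) • w) (Ioc (1/2:ℝ) 1) volume).congr_fun ?_ measurableSet_Ioc
    intro s hs
    simp only [hDdef]
    rw [if_neg (not_le.2 hs.1)]
  have hdzI1 : IntervalIntegrable (deriv z) volume 0 (1/2) := by
    rw [intervalIntegrable_iff] at hD1 ⊢
    exact hD1.congr_fun_ae (ae_restrict_of_ae hdz_ae.symm)
  have hdzI2 : IntervalIntegrable (deriv z) volume (1/2) 1 := by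
    rw [intervalIntegrable_iff] at hD2 ⊢
    exact hD2.congr_fun_ae (ae_restrict_of_ae hdz_ae.symm)
  have hdzI : IntervalIntegrable (deriv z) volume 0 1 := hdzI1.trans hdzI2
  have hzint : IntegrableOn (deriv z) (Icc 0 1) :=
    (intervalIntegrable_iff_integrableOn_Icc_of_le (by norm_num)).1 hdzI
  -- square integrability
  have hxsq' : IntervalIntegrable (fun s => ‖deriv x s‖ ^ 2) volume 0 1 :=
    (intervalIntegrable_iff_integrableOn_Icc_of_le (by norm_num)).2 hxsq
  have hsqc : IntervalIntegrable (fun s => ‖deriv x (2*s)‖ ^ 2) volume 0 (1/2) := by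
    have h := hxsq'.comp_mul_left (c := 2)
    norm_num at h
    exact h
  have hDsq1 : IntervalIntegrable (fun s => ‖D s‖ ^ 2) volume 0 (1/2) := by
    rw [intervalIntegrable_iff_integrableOn_Ioc_of_le (by norm_num)]
    refine (((hsqc.const_mul 4).def').mono_set
      (by rw [uIoc_of_le (by norm_num : (0:ℝ) ≤ 1/2)])).congr_fun ?_ measurableSet_Ioc
    intro s hs
    simp only [hDdef]
    rw [if_pos hs.2, norm_smul]
    simp only [Real.norm_ofNat]
    ring
  have hDsq2 : IntervalIntegrable (fun s => ‖D s‖ ^ 2) volume (1/2) 1 := by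
    rw [intervalIntegrable_iff_integrableOn_Ioc_of_le (by norm_num)]
    refine (integrableOn_const measure_Ioc_lt_top.ne :
      IntegrableOn (fun _ => ‖(2:ℝ) • w‖ ^ 2) (Ioc (1/2:ℝ) 1) volume).congr_fun ?_
      measurableSet_Ioc
    intro s hs
    simp only [hDdef]
    rw [if_neg (not_le.2 hs.1)]
  have hzsq : IntegrableOn (fun s => ‖deriv z s‖ ^ 2) (Icc 0 1) := by
    have hae : (fun s => ‖D s‖ ^ 2) =ᵐ[volume] fun s => ‖deriv z s‖ ^ 2 := by
      filter_upwards [hdz_ae] with s hs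
      rw [hs]
    have h := (intervalIntegrable_iff_integrableOn_Icc_of_le
      (by norm_num : (0:ℝ) ≤ 1)).1 (hDsq1.trans hDsq2)
    exact h.congr_fun_ae (ae_restrict_of_ae hae)
  -- continuity of z
  have hycont : Continuous y := continuous_const.add (continuous_id.smul continuous_const)
  have hmincont : Continuous fun s : ℝ => min (2*s) 1 :=
    (continuous_const.mul continuous_id).min continuous_const
  have hf1 : ContinuousOn (fun s : ℝ => x (min (2*s) 1)) (Icc 0 1) := by
    refine hxc.comp hmincont.continuousOn fun s hs => ?_
    exact ⟨le_min (by linarith [hs.1]) zero_le_one, min_le_right _ _⟩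
  have hf2 : ContinuousOn (fun s : ℝ => y (2*s - 1)) (Icc (1/2) 1) :=
    (hycont.comp ((continuous_const.mul continuous_id).sub continuous_const)).continuousOn
  have hzf1 : EqOn z (fun s : ℝ => x (min (2*s) 1)) (Icc 0 (1/2)) := by
    intro t ht
    simp only [hzdef]
    rw [if_pos ht.2]
  have hzf2 : EqOn z (fun s : ℝ => y (2*s - 1)) (Icc (1/2) 1) := by
    intro t ht
    rcases eq_or_lt_of_le ht.1 with h12 | h12
    · rw [← h12, hz_left _ le_rfl]
      show x (2 * (1/2)) = y (2 * (1/2) - 1)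
      rw [show (2:ℝ) * (1/2) = 1 by norm_num]
      rw [hx1, hydef]
      norm_num
    · exact hz_right t (not_le.2 h12)
  have piece : ∀ (a b : ℝ) (f : ℝ → Vec N), ContinuousOn f (Icc a b) → EqOn z f (Icc a b) →
      ∀ s : ℝ, ContinuousWithinAt z (Icc a b) s := by
    intro a b f hf heq s
    by_cases hmem : s ∈ Icc a b
    · exact (hf s hmem).congr heq (heq hmem)
    · exact continuousWithinAt_of_notMem_closure (by rwa [isClosed_Icc.closure_eq])
  have hzc : ContinuousOn z (Icc 0 1) := by
    rw [show Icc (0:ℝ) 1 = Icc 0 (1/2) ∪ Icc (1/2) 1 from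
      (Icc_union_Icc_eq_Icc (by norm_num) (by norm_num)).symm]
    intro s _
    exact continuousWithinAt_union.2
      ⟨piece _ _ _ (hf1.mono (Icc_subset_Icc le_rfl (by norm_num))) hzf1 s,
       piece _ _ _ hf2 hzf2 s⟩
  -- FTC for z
  have key_int : ∀ t : ℝ, t ∈ Icc (0:ℝ) (1/2) → (∫ s in (0:ℝ)..t, deriv z s) = x (2*t) - x 0 := by
    intro t ht
    have h1 : (∫ s in (0:ℝ)..t, deriv z s) = ∫ s in (0:ℝ)..t, D s :=
      intervalIntegral.integral_congr_ae (hdz_ae.mono fun s hs _ => hs)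
    have h2 : (∫ s in (0:ℝ)..t, D s) = ∫ s in (0:ℝ)..t, (2:ℝ) • deriv x (2*s) := by
      refine intervalIntegral.integral_congr fun s hs => ?_
      rw [uIcc_of_le ht.1] at hs
      simp only [hDdef]
      rw [if_pos (le_trans hs.2 ht.2)]
    have h3 : (∫ s in (0:ℝ)..t, (2:ℝ) • deriv x (2*s))
        = (2:ℝ) • ∫ s in (0:ℝ)..t, deriv x (2*s) := intervalIntegral.integral_smul _ _
    have h4 : (∫ s in (0:ℝ)..t, deriv x (2*s))
        = (2:ℝ)⁻¹ • ∫ s in (0:ℝ)..(2*t), deriv x s := by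
      have h := intervalIntegral.integral_comp_mul_left (a := 0) (b := t)
        (fun s => deriv x s) (two_ne_zero)
      simpa using h
    have h5 := hxftc (2*t) ⟨by linarith [ht.1], by linarith [ht.2]⟩
    rw [h1, h2, h3, h4, smul_smul, h5]
    rw [show (2:ℝ) * 2⁻¹ = 1 by norm_num, one_smul]
    abel
  have hftcz : ∀ t ∈ Icc (0:ℝ) 1, z t = z 0 + ∫ s in (0:ℝ)..t, deriv z s := by
    intro t ht
    by_cases hle : t ≤ 1/2
    · rw [key_int t ⟨ht.1, hle⟩, hz0, hz_left t hle]
      abel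
    · push_neg at hle
      have hsplit : (∫ s in (0:ℝ)..t, deriv z s)
          = (∫ s in (0:ℝ)..(1/2:ℝ), deriv z s) + ∫ s in (1/2:ℝ)..t, deriv z s :=
        (intervalIntegral.integral_add_adjacent_intervals hdzI1
          (hdzI2.mono_set (by
            rw [uIcc_of_le hle.le, uIcc_of_le (by norm_num : (1/2:ℝ) ≤ 1)]
            exact Icc_subset_Icc le_rfl ht.2))).symm
      have hA : (∫ s in (0:ℝ)..(1/2:ℝ), deriv z s) = x 1 - x 0 := by
        have h := key_int (1/2) ⟨by norm_num, le_rfl⟩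
        rw [show (2:ℝ) * (1/2) = 1 by norm_num] at h
        exact h
      have hB : (∫ s in (1/2:ℝ)..t, deriv z s) = (t - 1/2) • ((2:ℝ) • w) := by
        have hcongr : (∫ s in (1/2:ℝ)..t, deriv z s)
            = ∫ _ in (1/2:ℝ)..t, (2:ℝ) • w :=
          intervalIntegral.integral_congr_ae (by
            filter_upwards with s hs
            rw [uIoc_of_le hle.le] at hs
            exact hdz_gt s hs.1)
        rw [hcongr, intervalIntegral.integral_const]
      have hsm : (t - 1/2) • ((2:ℝ) • w) = (2*t - 1) • w := by
        rw [smul_smul]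
        congr 1
        ring
      rw [hsplit, hA, hB, hsm, hz0, hz_right t (not_le.2 hle), hydef]
      simp only [hx1]
      abel
  -- LV pieces
  set fx : ℝ → ℝ := fun s =>
    Real.sqrt (1/2 * (S.E - S.V (x s)) * S.prod (x s) (deriv x s) (deriv x s)) with hfxdef
  set fz : ℝ → ℝ := fun s =>
    Real.sqrt (1/2 * (S.E - S.V (z s)) * S.prod (z s) (deriv z s) (deriv z s)) with hfzdef
  have hsqrt4 : Real.sqrt 4 = 2 := by
    rw [show (4:ℝ) = 2^2 by norm_num, Real.sqrt_sq (by norm_num)]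
  have hfz1 : ∀ᵐ s : ℝ, s ∈ Ι (0:ℝ) (1/2) → fz s = 2 * fx (2*s) := by
    filter_upwards [ae_ne_half] with s hs hmem
    rw [uIoc_of_le (by norm_num : (0:ℝ) ≤ 1/2)] at hmem
    have hslt : s < 1/2 := lt_of_le_of_ne hmem.2 hs
    simp only [hfzdef, hfxdef]
    rw [hz_left s hslt.le, hdz_lt s hslt, prod_smul]
    rw [show 1/2 * (S.E - S.V (x (2*s))) * ((2:ℝ)^2 *
        S.prod (x (2*s)) (deriv x (2*s)) (deriv x (2*s)))
      = 4 * (1/2 * (S.E - S.V (x (2*s))) *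
        S.prod (x (2*s)) (deriv x (2*s)) (deriv x (2*s))) by ring]
    rw [Real.sqrt_mul (by norm_num : (0:ℝ) ≤ 4), hsqrt4]
  have hbx : ∀ s ∈ Icc (0:ℝ) 1, fx s ≤ Real.sqrt (1/2 * CV * Cg) * ‖deriv x s‖ := by
    intro s hs
    exact sqrt_bound S hCV0 hCg0 hCV hCg (hmemx s hs) _
  have hfx_int : IntervalIntegrable fx volume 0 1 :=
    (intervalIntegrable_iff_integrableOn_Icc_of_le (by norm_num)).2
      (LV_integrand_integrableOn S hxc hmemx hxi hbx)
  have hfxc2 : IntervalIntegrable (fun s => 2 * fx (2*s)) volume 0 (1/2) := by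
    have h := (hfx_int.comp_mul_left (c := 2)).const_mul 2
    norm_num at h
    exact h
  have hfz_int1 : IntervalIntegrable fz volume 0 (1/2) := by
    rw [intervalIntegrable_iff]
    exact (intervalIntegrable_iff.1 hfxc2).congr_fun_ae (ae_restrict_uIoc hfz1).symm
  -- second piece : explicit integrand
  set F2 : ℝ → ℝ := fun u =>
    Real.sqrt (1/2 * (S.E - S.V (y u)) * S.prod (y u) ((2:ℝ) • w) ((2:ℝ) • w)) with hF2def
  have hsegle : ∀ u ∈ Icc (0:ℝ) 1, S.V (y u) ≤ S.E := fun u hu => (hseg u hu).le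
  have hmapy : MapsTo y (Icc 0 1) S.U := fun u hu => S.hsub (hsegle u hu)
  have hVy : ContinuousOn (fun u : ℝ => S.V (y u)) (Icc 0 1) :=
    (S.hVC.continuousOn).comp hycont.continuousOn hmapy
  have hgy : ContinuousOn (fun u : ℝ => S.prod (y u) ((2:ℝ) • w) ((2:ℝ) • w)) (Icc 0 1) := by
    simp only [Setting.prod, gP]
    refine continuousOn_finset_sum _ fun i _ => continuousOn_finset_sum _ fun j _ => ?_
    exact ((((S.hgC i j).continuousOn).comp hycont.continuousOn hmapy).mul
      continuousOn_const).mul continuousOn_const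
  have hF2c : ContinuousOn F2 (Icc 0 1) := by
    simp only [hF2def]
    exact Real.continuous_sqrt.comp_continuousOn
      ((continuousOn_const.mul (continuousOn_const.sub hVy)).mul hgy)
  have haff : Continuous fun s : ℝ => 2*s - 1 :=
    (continuous_const.mul continuous_id).sub continuous_const
  have hmap21 : MapsTo (fun s : ℝ => 2*s - 1) (Icc (1/2) 1) (Icc 0 1) := by
    intro s hs
    simp only [mem_Icc] at hs ⊢
    constructor <;> linarith
  have hF2comp : ContinuousOn (fun s : ℝ => F2 (2*s - 1)) (Icc (1/2) 1) :=
    hF2c.comp haff.continuousOn hmap21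
  have hfz2 : ∀ᵐ s : ℝ, s ∈ Ι (1/2:ℝ) 1 → fz s = F2 (2*s - 1) := by
    filter_upwards with s hs
    rw [uIoc_of_le (by norm_num : (1/2:ℝ) ≤ 1)] at hs
    simp only [hfzdef, hF2def]
    rw [hz_right s (not_le.2 hs.1), hdz_gt s hs.1]
  have hfz_int2 : IntervalIntegrable fz volume (1/2) 1 := by
    rw [intervalIntegrable_iff]
    refine (intervalIntegrable_iff.1 ((hF2comp.mono (by
      rw [uIcc_of_le (by norm_num : (1/2:ℝ) ≤ 1)])).intervalIntegrable)).congr_fun_ae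
      (ae_restrict_uIoc hfz2).symm
  have hI1 : (∫ s in (0:ℝ)..(1/2:ℝ), fz s) = S.LV x := by
    rw [intervalIntegral.integral_congr_ae hfz1]
    rw [intervalIntegral.integral_const_mul]
    have h4 : (∫ s in (0:ℝ)..(1/2:ℝ), fx (2*s)) = (2:ℝ)⁻¹ • ∫ s in (0:ℝ)..1, fx s := by
      rw [intervalIntegral.integral_comp_mul_left fx two_ne_zero]
      norm_num
    rw [h4]
    show (2:ℝ) * ((2:ℝ)⁻¹ * ∫ s in (0:ℝ)..1, fx s) = S.LV x
    rw [Setting.LV, ← hfxdef]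
    ring
  have hI2 : (∫ s in (1/2:ℝ)..1, fz s) ≤ Real.sqrt (1/2 * CV * Cg) * ‖w‖ := by
    rw [intervalIntegral.integral_congr_ae hfz2]
    have hb2 : ∀ s ∈ Icc (1/2:ℝ) 1, F2 (2*s - 1)
        ≤ Real.sqrt (1/2 * CV * Cg) * (2 * ‖w‖) := by
      intro s hs
      have h := sqrt_bound S hCV0 hCg0 hCV hCg (hsegle (2*s-1) (hmap21 hs)) ((2:ℝ) • w)
      rw [norm_smul, Real.norm_ofNat] at h
      exact h
    calc (∫ s in (1/2:ℝ)..1, F2 (2*s - 1))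
        ≤ ∫ _ in (1/2:ℝ)..1, Real.sqrt (1/2 * CV * Cg) * (2 * ‖w‖) := by
          refine intervalIntegral.integral_mono_on (by norm_num)
            ((hF2comp.mono (by rw [uIcc_of_le (by norm_num : (1/2:ℝ) ≤ 1)])).intervalIntegrable)
            intervalIntegrable_const hb2
      _ = Real.sqrt (1/2 * CV * Cg) * ‖w‖ := by
          rw [intervalIntegral.integral_const]
          simp
          ring
  -- conclusion
  refine ⟨z, ⟨⟨hzc, hzint, hzsq, hftcz⟩, by rw [hz0]; exact hx0, ?_, hz1⟩, ?_⟩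
  · intro s hs
    by_cases hle : s ≤ 1/2
    · rw [hz_left s hle]
      exact hxlt _ ⟨by linarith [hs.1], by linarith⟩
    · rw [hz_right s hle]
      push_neg at hle
      exact hseg (2*s - 1) ⟨by linarith, by linarith [hs.2]⟩
  · have hLVz : S.LV z = (∫ s in (0:ℝ)..(1/2:ℝ), fz s) + ∫ s in (1/2:ℝ)..1, fz s := by
      rw [Setting.LV, ← hfzdef]
      exact (intervalIntegral.integral_add_adjacent_intervals hfz_int1 hfz_int2).symm
    rw [hLVz, hI1]
    linarith [hI2]

private lemma isOpen_well (S : Setting N) : IsOpen {p : Vec N | S.V p < S.E} := by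
  rw [isOpen_iff_mem_nhds]
  intro p hp
  have hp' : S.V p < S.E := hp
  have hpU : p ∈ S.U := S.hsub (show p ∈ {x | S.V x ≤ S.E} from le_of_lt hp')
  have hc : ContinuousAt S.V p := S.hVC.continuousOn.continuousAt (S.hU.mem_nhds hpU)
  exact hc.preimage_mem_nhds (Iio_mem_nhds hp)

private lemma exists_bounds (S : Setting N) :
    ∃ CV Cg : ℝ, 0 ≤ CV ∧ 0 ≤ Cg ∧ (∀ p, S.V p ≤ S.E → S.E - S.V p ≤ CV) ∧
      (∀ p, S.V p ≤ S.E → ∀ v : Vec N, S.prod p v v ≤ Cg * ‖v‖ ^ 2) := by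
  obtain ⟨C0, hC0⟩ := S.hcomp.exists_bound_of_continuousOn
    ((S.hVC.continuousOn).mono S.hsub)
  obtain ⟨C1, hC1⟩ := S.hcomp.exists_bound_of_continuousOn
    (f := fun p => ∑ i, ∑ j, |S.g p i j|)
    (continuousOn_finset_sum _ fun i _ => continuousOn_finset_sum _ fun j _ =>
      (((S.hgC i j).continuousOn).mono S.hsub).abs)
  refine ⟨|S.E| + max C0 0, max C1 0, by positivity, le_max_right _ _, ?_, ?_⟩
  · intro p hp
    have h1 : |S.V p| ≤ max C0 0 := by
      refine le_trans ?_ (le_max_left _ _)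
      rw [← Real.norm_eq_abs]
      exact hC0 p hp
    have h2 := le_abs_self S.E
    have h3 := neg_abs_le (S.V p)
    have h4 := abs_le.1 h1
    linarith [h4.1]
  · intro p hp v
    have hb : (∑ i, ∑ j, |S.g p i j|) ≤ max C1 0 := by
      refine le_trans (le_abs_self _) (le_trans ?_ (le_max_left _ _))
      rw [← Real.norm_eq_abs]
      exact hC1 p hp
    have hterm : ∀ i j, S.g p i j * v i * v j ≤ |S.g p i j| * ‖v‖ ^ 2 := by
      intro i j
      have h1 : |v i| ≤ ‖v‖ := by rw [← Real.norm_eq_abs]; exact norm_le_pi_norm v i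
      have h2 : |v j| ≤ ‖v‖ := by rw [← Real.norm_eq_abs]; exact norm_le_pi_norm v j
      calc S.g p i j * v i * v j ≤ |S.g p i j * v i * v j| := le_abs_self _
        _ = |S.g p i j| * (|v i| * |v j|) := by rw [abs_mul, abs_mul, mul_assoc]
        _ ≤ |S.g p i j| * (‖v‖ * ‖v‖) := by
            refine mul_le_mul_of_nonneg_left ?_ (abs_nonneg _)
            exact mul_le_mul h1 h2 (abs_nonneg _) (norm_nonneg _)
        _ = |S.g p i j| * ‖v‖ ^ 2 := by ring
    calc S.prod p v v = ∑ i, ∑ j, S.g p i j * v i * v j := rfl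
      _ ≤ ∑ i, ∑ j, |S.g p i j| * ‖v‖ ^ 2 :=
          Finset.sum_le_sum fun i _ => Finset.sum_le_sum fun j _ => hterm i j
      _ = (∑ i, ∑ j, |S.g p i j|) * ‖v‖ ^ 2 := by
          rw [Finset.sum_mul]
          refine Finset.sum_congr rfl fun i _ => ?_
          rw [Finset.sum_mul]
      _ ≤ max C1 0 * ‖v‖ ^ 2 := mul_le_mul_of_nonneg_right hb (by positivity)

private lemma boundary_estimate (S : Setting N) {CV Cg : ℝ} (hCV0 : 0 ≤ CV) (hCg0 : 0 ≤ Cg)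
    (hCV : ∀ p, S.V p ≤ S.E → S.E - S.V p ≤ CV)
    (hCg : ∀ p, S.V p ≤ S.E → ∀ v : Vec N, S.prod p v v ≤ Cg * ‖v‖ ^ 2)
    {P : Vec N} (hP : S.V P = S.E) :
    ∃ δ > 0, ∃ Cb : ℝ, 0 ≤ Cb ∧ ∀ Q : Vec N, dist Q P < δ → S.V Q < S.E →
      ∃ x, S.InXQ Q x ∧ S.LV x ≤ Cb * (S.E - S.V Q) := by
  have hPU : P ∈ S.U := S.hsub (le_of_eq hP)
  set w : Vec N := euclGrad S.V P with hwdef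
  have hw : w ≠ 0 := S.hreg P hP
  set c0 : ℝ := ∑ i, w i * w i with hc0def
  have hc0pos : 0 < c0 := by
    obtain ⟨i, hi⟩ := Function.ne_iff.1 hw
    refine Finset.sum_pos' (fun j _ => mul_self_nonneg _) ⟨i, Finset.mem_univ i, ?_⟩
    exact mul_self_pos.2 hi
  -- the derivative of V at any point p applied to w
  have happ : ∀ p : Vec N, (fderiv ℝ S.V p) w = ∑ i, w i * (fderiv ℝ S.V p (Pi.single i 1)) := by
    intro p
    have hw' : w = ∑ i, w i • (Pi.single i 1 : Vec N) := by
      funext j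
      rw [Finset.sum_apply]
      simp [Pi.single_apply]
    conv_lhs => rw [hw']
    rw [map_sum]
    simp
  have hφPval : (fderiv ℝ S.V P) w = c0 := by
    rw [happ P, hc0def, hwdef]
    simp only [euclGrad]
  have hdiff : ∀ p ∈ S.U, DifferentiableAt ℝ S.V p := fun p hp =>
    (S.hVC.differentiableOn (by norm_num)).differentiableAt (S.hU.mem_nhds hp)
  have hfc : ContinuousOn (fderiv ℝ S.V) S.U :=
    S.hVC.continuousOn_fderiv_of_isOpen S.hU (by norm_num)
  have hφc : ContinuousAt (fun p => (fderiv ℝ S.V p) w) P :=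
    ((ContinuousLinearMap.apply ℝ ℝ w).continuous.comp_continuousOn hfc).continuousAt
      (S.hU.mem_nhds hPU)
  have hev1 : {p : Vec N | c0/2 < (fderiv ℝ S.V p) w} ∈ nhds P := by
    refine hφc.preimage_mem_nhds (Ioi_mem_nhds ?_)
    rw [hφPval]
    linarith
  obtain ⟨δ0, hδ0pos, hball⟩ := (Metric.nhds_basis_closedBall.mem_iff).1
    (Filter.inter_mem hev1 (S.hU.mem_nhds hPU))
  set T : ℝ := δ0 / (2 * (‖w‖ + 1)) with hTdef
  have hTpos : 0 < T := by
    apply div_pos hδ0pos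
    positivity
  have hVc : ContinuousAt S.V P := S.hVC.continuousOn.continuousAt (S.hU.mem_nhds hPU)
  have hev4 : {Q : Vec N | S.E - c0/2 * T < S.V Q} ∈ nhds P := by
    refine hVc.preimage_mem_nhds (Ioi_mem_nhds ?_)
    rw [hP]
    nlinarith
  obtain ⟨δ1, hδ1pos, hball1⟩ := (Metric.nhds_basis_ball.mem_iff).1 hev4
  refine ⟨min (δ0/2) δ1, by positivity,
    Real.sqrt (1/2 * CV * Cg) * ‖w‖ * (2 / c0), by positivity, ?_⟩
  intro Q hQdist hQlt
  have hQd0 : dist Q P < δ0/2 := lt_of_lt_of_le hQdist (min_le_left _ _)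
  have hQd1 : dist Q P < δ1 := lt_of_lt_of_le hQdist (min_le_right _ _)
  have hQV : S.E - c0/2 * T < S.V Q := hball1 (Metric.mem_ball.2 hQd1)
  -- the ray from Q in direction w stays in the good ball
  have hmemT : ∀ t ∈ Icc (0:ℝ) T, Q + t • w ∈ Metric.closedBall P δ0 := by
    intro t ht
    have h1 : dist (Q + t • w) Q = t * ‖w‖ := by
      rw [dist_eq_norm]
      have : Q + t • w - Q = t • w := by abel
      rw [this, norm_smul, Real.norm_eq_abs, abs_of_nonneg ht.1]
    have h2 : t * ‖w‖ ≤ T * ‖w‖ := mul_le_mul_of_nonneg_right ht.2 (norm_nonneg w)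
    have h3 : T * ‖w‖ ≤ δ0/2 := by
      rw [hTdef, div_mul_eq_mul_div, div_le_div_iff₀ (by positivity) (by norm_num)]
      nlinarith [norm_nonneg w]
    have h4 := dist_triangle (Q + t • w) Q P
    rw [Metric.mem_closedBall]
    linarith
  have hmemball : ∀ t ∈ Icc (0:ℝ) T,
      Q + t • w ∈ {p : Vec N | c0/2 < (fderiv ℝ S.V p) w} ∩ S.U := fun t ht =>
    hball (hmemT t ht)
  set ψ : ℝ → ℝ := fun t => S.V (Q + t • w) with hψdef
  have hψd : ∀ t ∈ Icc (0:ℝ) T, HasDerivAt ψ ((fderiv ℝ S.V (Q + t • w)) w) t := by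
    intro t ht
    exact ((hdiff _ (hmemball t ht).2).hasFDerivAt).comp_hasDerivAt t (hasDerivAt_affine Q w t)
  have hψcont : ContinuousOn ψ (Icc 0 T) := fun t ht =>
    (hψd t ht).continuousAt.continuousWithinAt
  have hIoosub : interior (Icc (0:ℝ) T) ⊆ Icc (0:ℝ) T := interior_subset
  have hψdiffOn : DifferentiableOn ℝ ψ (interior (Icc (0:ℝ) T)) := fun t ht =>
    ((hψd t (hIoosub ht)).differentiableAt).differentiableWithinAt
  have hψderiv_ge : ∀ t ∈ interior (Icc (0:ℝ) T), c0/2 ≤ deriv ψ t := by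
    intro t ht
    rw [(hψd t (hIoosub ht)).deriv]
    exact (hmemball t (hIoosub ht)).1.le
  have hgrow := (convex_Icc (0:ℝ) T).mul_sub_le_image_sub_of_le_deriv hψcont hψdiffOn
    hψderiv_ge
  have hψsm : StrictMonoOn ψ (Icc 0 T) := by
    refine strictMonoOn_of_deriv_pos (convex_Icc 0 T) hψcont fun t ht => ?_
    rw [(hψd t (hIoosub ht)).deriv]
    calc (0:ℝ) < c0/2 := by linarith
      _ ≤ _ := (hmemball t (hIoosub ht)).1.le
  have hψ0 : ψ 0 = S.V Q := by rw [hψdef]; norm_num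
  have hψT : S.E ≤ ψ T := by
    have h := hgrow 0 ⟨le_rfl, hTpos.le⟩ T ⟨hTpos.le, le_rfl⟩ hTpos.le
    rw [hψ0] at h
    nlinarith
  have hmemE : S.E ∈ Icc (ψ 0) (ψ T) := by
    rw [hψ0]
    exact ⟨hQlt.le, hψT⟩
  obtain ⟨t0, ht0mem, ht0⟩ := intermediate_value_Icc hTpos.le hψcont hmemE
  have ht0pos : 0 < t0 := by
    rcases eq_or_lt_of_le ht0mem.1 with h0 | h0
    · exfalso
      rw [← h0, hψ0] at ht0
      exact absurd ht0 (ne_of_lt hQlt)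
    · exact h0
  have ht0le : t0 ≤ 2 * (S.E - S.V Q) / c0 := by
    have h := hgrow 0 ⟨le_rfl, hTpos.le⟩ t0 ht0mem ht0mem.1
    rw [hψ0, ht0] at h
    rw [le_div_iff₀ (by positivity)]
    nlinarith
  -- the candidate path
  set A : Vec N := Q + t0 • w with hAdef
  set u : Vec N := -(t0 • w) with hudef
  have hxval : ∀ s : ℝ, A + s • u = Q + ((1 - s) * t0) • w := by
    intro s
    rw [hAdef, hudef]
    module
  have hψval : ∀ s ∈ Icc (0:ℝ) 1, S.V (A + s • u) = ψ ((1 - s) * t0) := by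
    intro s _
    rw [hxval s, hψdef]
  have hmem01 : ∀ s ∈ Icc (0:ℝ) 1, (1 - s) * t0 ∈ Icc (0:ℝ) T := by
    intro s hs
    constructor
    · have : 0 ≤ 1 - s := by linarith [hs.2]
      positivity
    · have h1 : (1 - s) * t0 ≤ 1 * t0 :=
        mul_le_mul_of_nonneg_right (by linarith [hs.1]) ht0pos.le
      have h2 : (1:ℝ) * t0 ≤ T := by rw [one_mul]; exact ht0mem.2
      linarith
  have hle : ∀ s ∈ Icc (0:ℝ) 1, S.V (A + s • u) ≤ S.E := by
    intro s hs
    rw [hψval s hs, ← ht0]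
    exact hψsm.monotoneOn (hmem01 s hs) ht0mem (by nlinarith [hs.1, ht0pos])
  refine ⟨fun s => A + s • u, ⟨H1On_affine A u, ?_, ?_, ?_⟩, ?_⟩
  · show S.V (A + (0:ℝ) • u) = S.E
    rw [show A + (0:ℝ) • u = A by simp, hAdef]
    exact ht0
  · intro s hs
    show S.V (A + s • u) < S.E
    have hlt' : (1 - s) * t0 < t0 := by nlinarith [hs.1, ht0pos]
    rw [hψval s ⟨hs.1.le, hs.2⟩, ← ht0]
    exact hψsm (hmem01 s ⟨hs.1.le, hs.2⟩) ht0mem hlt'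
  · show A + (1:ℝ) • u = Q
    rw [hxval 1]
    norm_num
  · have hLV := LV_affine_le S hCV0 hCg0 hCV hCg hle
    have hnu : ‖u‖ = t0 * ‖w‖ := by
      rw [hudef, norm_neg, norm_smul, Real.norm_eq_abs, abs_of_nonneg ht0pos.le]
    refine le_trans hLV ?_
    rw [hnu]
    have hs0 : 0 ≤ Real.sqrt (1/2 * CV * Cg) := Real.sqrt_nonneg _
    have h1 : Real.sqrt (1/2 * CV * Cg) * (t0 * ‖w‖)
        ≤ Real.sqrt (1/2 * CV * Cg) * ((2 * (S.E - S.V Q) / c0) * ‖w‖) := by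
      refine mul_le_mul_of_nonneg_left ?_ hs0
      exact mul_le_mul_of_nonneg_right ht0le (norm_nonneg w)
    refine le_trans h1 (le_of_eq ?_)
    field_simp

end Aux

/-- **Lemma 3.3**: the distance `d_V` from the boundary of the potential well is
continuous on `Ω_E`, and extends continuously by `0` to the boundary `V⁻¹(E)`. -/
theorem dV_continuous {N : ℕ} (S : Setting N) :
    ContinuousOn S.dV {x | S.V x < S.E} ∧
    ContinuousOn (fun Q => if S.V Q < S.E then S.dV Q else 0) {x | S.V x ≤ S.E} := by
  obtain ⟨CV, Cg, hCV0, hCg0, hCV, hCg⟩ := exists_bounds S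
  set Cseg : ℝ := Real.sqrt (1/2 * CV * Cg) with hCsegdef
  have hCseg0 : 0 ≤ Cseg := Real.sqrt_nonneg _
  have hopen := isOpen_well S
  -- segments inside balls contained in the well
  have hsegball : ∀ (Q0 : Vec N) (r : ℝ), Metric.ball Q0 r ⊆ {p : Vec N | S.V p < S.E} →
      ∀ A ∈ Metric.ball Q0 r, ∀ B ∈ Metric.ball Q0 r,
      ∀ t ∈ Icc (0:ℝ) 1, S.V (A + t • (B - A)) < S.E := by
    intro Q0 r hsub A hA B hB t ht
    have hco : A + t • (B - A) = (1 - t) • A + t • B := by module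
    refine hsub ?_
    rw [hco]
    exact (convex_ball Q0 r) hA hB (by linarith [ht.2]) ht.1 (by ring)
  -- the key one-sided estimate
  have key : ∀ A B : Vec N, (∀ t ∈ Icc (0:ℝ) 1, S.V (A + t • (B - A)) < S.E) →
      (∃ x, S.InXQ A x) →
      (∃ x', S.InXQ B x') ∧ S.dV B ≤ S.dV A + Cseg * ‖B - A‖ := by
    intro A B hseg hex
    obtain ⟨x0, hx0⟩ := hex
    constructor
    · obtain ⟨z, hz, -⟩ := concat_step S hCV0 hCg0 hCV hCg hx0 hseg
      exact ⟨z, hz⟩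
    · by_contra hcon
      push_neg at hcon
      set ε : ℝ := S.dV B - (S.dV A + Cseg * ‖B - A‖) with hεdef
      have hεpos : 0 < ε := by rw [hεdef]; linarith
      have hne : {r | ∃ x, S.InXQ A x ∧ r = S.LV x}.Nonempty := ⟨S.LV x0, x0, hx0, rfl⟩
      obtain ⟨r, hrmem, hrlt⟩ := Real.lt_sInf_add_pos hne hεpos
      obtain ⟨x1, hx1, rfl⟩ := hrmem
      obtain ⟨z, hz, hLz⟩ := concat_step S hCV0 hCg0 hCV hCg hx1 hseg
      have h1 : S.dV B ≤ S.LV z := csInf_le (dV_bddBelow S B) ⟨z, hz, rfl⟩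
      have h2 : sInf {r | ∃ x, S.InXQ A x ∧ r = S.LV x} = S.dV A := rfl
      rw [h2] at hrlt
      rw [hεdef] at hrlt
      linarith
  -- continuity at interior points
  have hCA : ∀ Q0 : Vec N, S.V Q0 < S.E → ContinuousAt S.dV Q0 := by
    intro Q0 hQ0
    obtain ⟨r, hr, hrsub⟩ := Metric.isOpen_iff.1 hopen Q0 hQ0
    have hQ0mem : Q0 ∈ Metric.ball Q0 r := Metric.mem_ball_self hr
    by_cases hex : ∃ x, S.InXQ Q0 x
    · have hlip : ∀ Q ∈ Metric.ball Q0 r, dist (S.dV Q) (S.dV Q0) ≤ Cseg * dist Q Q0 := by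
        intro Q hQ
        have hseg1 := fun t ht => hsegball Q0 r hrsub Q0 hQ0mem Q hQ t ht
        have hseg2 := fun t ht => hsegball Q0 r hrsub Q hQ Q0 hQ0mem t ht
        obtain ⟨hexQ, h12⟩ := key Q0 Q hseg1 hex
        obtain ⟨-, h21⟩ := key Q Q0 hseg2 hexQ
        rw [Real.dist_eq, abs_sub_le_iff]
        constructor
        · rw [dist_eq_norm]
          linarith [h12]
        · rw [dist_eq_norm]
          have h21' : S.dV Q0 ≤ S.dV Q + Cseg * ‖Q - Q0‖ := by
            rwa [norm_sub_rev Q0 Q] at h21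
          linarith [h21']
      rw [Metric.continuousAt_iff]
      intro ε hε
      refine ⟨min r (ε / (Cseg + 1)), by positivity, ?_⟩
      intro Q hQd
      have hQr : dist Q Q0 < r := lt_of_lt_of_le hQd (min_le_left _ _)
      have hQe : dist Q Q0 < ε / (Cseg + 1) := lt_of_lt_of_le hQd (min_le_right _ _)
      have h1 : dist (S.dV Q) (S.dV Q0) ≤ Cseg * dist Q Q0 :=
        hlip Q (Metric.mem_ball.2 hQr)
      have h2 : Cseg * dist Q Q0 ≤ Cseg * (ε / (Cseg + 1)) :=
        mul_le_mul_of_nonneg_left hQe.le hCseg0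
      have h3 : Cseg * (ε / (Cseg + 1)) < ε := by
        rw [mul_div_assoc']
        rw [div_lt_iff₀ (by linarith)]
        nlinarith
      linarith
    · have hall : ∀ Q ∈ Metric.ball Q0 r, S.dV Q = 0 := by
        intro Q hQ
        have hnoQ : ¬ ∃ x, S.InXQ Q x := by
          rintro ⟨x, hxx⟩
          exact hex (key Q Q0 (fun t ht => hsegball Q0 r hrsub Q hQ Q0 hQ0mem t ht) ⟨x, hxx⟩).1
        have hempty : {r | ∃ x, S.InXQ Q x ∧ r = S.LV x} = ∅ :=
          eq_empty_iff_forall_notMem.2 fun r ⟨x, hxx, _⟩ => hnoQ ⟨x, hxx⟩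
        rw [Setting.dV, hempty, Real.sInf_empty]
      have hev : S.dV =ᶠ[nhds Q0] fun _ => (0:ℝ) := by
        filter_upwards [Metric.ball_mem_nhds Q0 hr] with Q hQ
        exact hall Q hQ
      exact (continuousAt_congr hev).2 continuousAt_const
  refine ⟨fun Q0 hQ0 => (hCA Q0 hQ0).continuousWithinAt, ?_⟩
  intro P hPle
  have hPle' : S.V P ≤ S.E := hPle
  rcases lt_or_eq_of_le hPle' with hPlt | hPeq
  · have hev : (fun Q => if S.V Q < S.E then S.dV Q else 0) =ᶠ[nhds P] S.dV := by
      filter_upwards [hopen.mem_nhds hPlt] with Q hQ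
      exact if_pos hQ
    exact ((continuousAt_congr hev.symm).1 (hCA P hPlt)).continuousWithinAt
  · obtain ⟨δ, hδ, Cb, hCb0, hbd⟩ := boundary_estimate S hCV0 hCg0 hCV hCg hPeq
    have hFP : (if S.V P < S.E then S.dV P else 0) = 0 := by
      rw [if_neg (by rw [hPeq]; exact lt_irrefl _)]
    show Tendsto (fun Q => if S.V Q < S.E then S.dV Q else 0)
      (nhdsWithin P {x | S.V x ≤ S.E}) (nhds (if S.V P < S.E then S.dV P else 0))
    rw [hFP]
    have hVcw : ContinuousWithinAt S.V {x : Vec N | S.V x ≤ S.E} P :=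
      ((S.hVC.continuousOn).mono S.hsub) P hPle'
    have htend : Tendsto (fun Q => Cb * (S.E - S.V Q))
        (nhdsWithin P {x : Vec N | S.V x ≤ S.E}) (nhds 0) := by
      have h := ((tendsto_const_nhds (x := S.E)).sub hVcw).const_mul Cb
      rw [hPeq, sub_self, mul_zero] at h
      exact h
    refine squeeze_zero' ?_ ?_ htend
    · filter_upwards with Q
      by_cases h : S.V Q < S.E
      · rw [if_pos h]; exact dV_nonneg S Q
      · rw [if_neg h]
    · filter_upwards [mem_nhdsWithin_of_mem_nhds (Metric.ball_mem_nhds P hδ),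
        self_mem_nhdsWithin] with Q hQball hQle
      by_cases h : S.V Q < S.E
      · rw [if_pos h]
        obtain ⟨x, hxx, hLx⟩ := hbd Q (Metric.mem_ball.1 hQball) h
        exact le_trans (csInf_le (dV_bddBelow S Q) ⟨x, hxx, rfl⟩) hLx
      · rw [if_neg h]
        have hEq : S.V Q = S.E := le_antisymm hQle (not_lt.1 h)
        rw [hEq, sub_self, mul_zero]

end
end JacobiPaper
end
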